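/- arXiv:2403.16651 — 5 statements merged into one kernel-verified Lean document; each statement's English description precedes it below -/
import Mathlib

section
/- Suppose t₀ ∈ ℝ satisfies F(t₀) > 0 and let λ ≥ 0. Then (M_λ(t))_{t ≥ t₀} is a reverse martingale with respect to the reverse filtration (G_t)_{t ≥ t₀}: for all t₀ ≤ s₀ < s₁, E[ M_λ(s₀) | G_{s₁} ] = M_λ(s₁) almost surely. Moreover E[ M_λ(t) ] = 1 for all t ≥ t₀. -/
/-!
Write `M_λ(t) = (1+λ)^{-n} ∏ᵢ (1 + (λ / F t) · 1{Xᵢ ≤ t})`. The σ-algebra `G_s` is generated by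
a π-system of sets `⋂ᵢ {Xᵢ ∈ Bᵢ}` with every `Bᵢ ⊇ (-∞, s]`. On such a set independence splits
`∫ M_λ(t)` into the factors `(P(Xᵢ ∈ Bᵢ) + λ) / (1 + λ)` for every `t ≤ s`: the tilt `λ / F t` is
compensated exactly by `P(Xᵢ ≤ t) = F t`. Hence `M_λ(s₀)` and the `G_{s₁}`-measurable `M_λ(s₁)`
have the same integral over a generating π-system of `G_{s₁}` and over the whole space, which
identifies the conditional expectation; `Bᵢ = ℝ` gives `E[M_λ(t)] = 1`.
-/

open MeasureTheory ProbabilityTheory Real Set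

section PiSystem

variable {Ω E : Type*} [NormedAddCommGroup E] [NormedSpace ℝ E] {m m0 : MeasurableSpace Ω}
  {μ : Measure Ω} {p : Set (Set Ω)} {f g : Ω → E}

theorem setIntegral_eq_setIntegral_of_isPiSystem (hm : m ≤ m0)
    (hgen : m = MeasurableSpace.generateFrom p) (hp : IsPiSystem p)
    (hf : Integrable f μ) (hg : Integrable g μ)
    (basic : ∀ s ∈ p, ∫ x in s, f x ∂μ = ∫ x in s, g x ∂μ)
    (h_univ : ∫ x, f x ∂μ = ∫ x, g x ∂μ) {s : Set Ω} (hs : MeasurableSet[m] s) :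
    ∫ x in s, f x ∂μ = ∫ x in s, g x ∂μ := by
  induction s, hs using MeasurableSpace.induction_on_inter hgen hp with
  | empty => simp
  | basic s hs => exact basic s hs
  | compl s hs ih =>
    rw [setIntegral_compl (hm s hs) hf, setIntegral_compl (hm s hs) hg, ih, h_univ]
  | iUnion s hdisj hs ih =>
    rw [integral_iUnion (fun i ↦ hm _ (hs i)) hdisj hf.integrableOn,
      integral_iUnion (fun i ↦ hm _ (hs i)) hdisj hg.integrableOn]
    exact tsum_congr ih

theorem ae_eq_condExp_of_forall_setIntegral_eq_of_isPiSystem [CompleteSpace E]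
    [IsFiniteMeasure μ] (hm : m ≤ m0) (hgen : m = MeasurableSpace.generateFrom p)
    (hp : IsPiSystem p) (hf : Integrable f μ) (hg : Integrable g μ)
    (hgm : StronglyMeasurable[m] g) (basic : ∀ s ∈ p, ∫ x in s, g x ∂μ = ∫ x in s, f x ∂μ)
    (h_univ : ∫ x, g x ∂μ = ∫ x, f x ∂μ) :
    g =ᵐ[μ] μ[f | m] :=
  ae_eq_condExp_of_forall_setIntegral_eq hm hf (fun _ _ _ ↦ hg.integrableOn)
    (fun _ hs _ ↦ setIntegral_eq_setIntegral_of_isPiSystem hm hgen hp hg hf basic h_univ hs)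
    hgm.aestronglyMeasurable

end PiSystem

section Cylinders

variable {Ω ι : Type*}

def cylindersAbove (X : ι → Ω → ℝ) (s : ℝ) : Set (Set Ω) :=
  {A | ∃ B : ι → Set ℝ, (∀ i, MeasurableSet (B i) ∧ Iic s ⊆ B i) ∧ A = ⋂ i, X i ⁻¹' B i}

lemma isPiSystem_cylindersAbove (X : ι → Ω → ℝ) (s : ℝ) : IsPiSystem (cylindersAbove X s) := by
  rintro _ ⟨B, hB, rfl⟩ _ ⟨B', hB', rfl⟩ -
  refine ⟨fun i ↦ B i ∩ B' i,
    fun i ↦ ⟨(hB i).1.inter (hB' i).1, subset_inter (hB i).2 (hB' i).2⟩, ?_⟩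
  simp only [preimage_inter, iInter_inter_distrib]

lemma generatePiSystem_subset_cylindersAbove (X : ι → Ω → ℝ) (s : ℝ) :
    generatePiSystem {A | ∃ (i : ι) (r : ℝ), s ≤ r ∧ A = {ω | X i ω ≤ r}}
      ⊆ cylindersAbove X s := by
  classical
  refine (generatePiSystem_mono ?_).trans
    (generatePiSystem_subset_self (isPiSystem_cylindersAbove X s))
  rintro _ ⟨i, r, hsr, rfl⟩
  refine ⟨fun j ↦ if j = i then Iic r else univ, fun j ↦ ?_, ?_⟩
  · dsimp only
    split_ifs
    exacts [⟨measurableSet_Iic, Iic_subset_Iic.2 hsr⟩, ⟨.univ, subset_univ _⟩]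
  · ext ω
    simp [apply_ite]

end Cylinders

section EmpiricalCount

variable {Ω ι : Type*} [Fintype ι] {m : MeasurableSpace Ω} {μ : Measure Ω} {X : ι → Ω → ℝ}
  {t : ℝ}

/-- This is `n F̂ₙ(t)`. -/
noncomputable def empiricalCount (X : ι → Ω → ℝ) (t : ℝ) (ω : Ω) : ℕ :=
  ∑ i, if X i ω ≤ t then 1 else 0

lemma empiricalCount_le_card (ω : Ω) : empiricalCount X t ω ≤ Fintype.card ι := by
  rw [empiricalCount, Finset.sum_boole]
  exact Finset.card_filter_le _ _

lemma pow_empiricalCount {R : Type*} [CommMonoid R] (b : R) (ω : Ω) :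
    b ^ empiricalCount X t ω = ∏ i, if X i ω ≤ t then b else 1 := by
  rw [empiricalCount, ← Finset.prod_pow_eq_pow_sum]
  congr! 1 with i
  split_ifs <;> simp

lemma measurable_empiricalCount (hX : ∀ i, MeasurableSet {ω | X i ω ≤ t}) :
    Measurable (empiricalCount X t) :=
  Finset.measurable_sum _ fun i _ ↦ Measurable.ite (hX i) measurable_const measurable_const

lemma integrable_pow_empiricalCount [IsFiniteMeasure μ] (hX : ∀ i, Measurable (X i)) (b : ℝ) :
    Integrable (fun ω ↦ b ^ empiricalCount X t ω) μ := by
  refine .of_bound (C := max |b| 1 ^ Fintype.card ι) ?_ (.of_forall fun ω ↦ ?_)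
  · exact (measurable_from_top.comp (measurable_empiricalCount fun i ↦
      measurableSet_le (hX i) measurable_const)).aestronglyMeasurable
  · rw [norm_pow, norm_eq_abs]
    exact (pow_le_pow_left₀ (abs_nonneg b) (le_max_left _ _) _).trans
      (pow_le_pow_right₀ (le_max_right _ _) (empiricalCount_le_card ω))

lemma integral_indicator_ite_le [IsFiniteMeasure μ] {Y : Ω → ℝ} (hY : Measurable Y)
    {B : Set ℝ} (hB : MeasurableSet B) (htB : Iic t ⊆ B) (a : ℝ) :
    ∫ ω, B.indicator (fun x ↦ if x ≤ t then 1 + a else 1) (Y ω) ∂μ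
      = μ.real (Y ⁻¹' B) + a * μ.real (Y ⁻¹' Iic t) := by
  have h_split : ∀ x, B.indicator (fun x ↦ if x ≤ t then 1 + a else 1) x
      = B.indicator 1 x + a * (Iic t).indicator 1 x := by
    intro x
    by_cases hxt : x ≤ t
    · simp [hxt, htB hxt, add_comm]
    · by_cases hxB : x ∈ B <;> simp [hxt, hxB]
  have h_preimage : ∀ S : Set ℝ,
      (fun ω ↦ S.indicator (1 : ℝ → ℝ) (Y ω)) = (Y ⁻¹' S).indicator 1 :=
    fun S ↦ funext fun ω ↦ (indicator_comp_right Y).symm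
  have h_int : ∀ S : Set ℝ, MeasurableSet S →
      Integrable (fun ω ↦ S.indicator (1 : ℝ → ℝ) (Y ω)) μ :=
    fun S hS ↦ h_preimage S ▸ (integrable_const 1).indicator (hY hS)
  simp_rw [h_split]
  rw [integral_add (h_int B hB) ((h_int _ measurableSet_Iic).const_mul a), integral_const_mul,
    h_preimage, h_preimage, integral_indicator_one (hY hB),
    integral_indicator_one (hY measurableSet_Iic)]

lemma setIntegral_pow_empiricalCount [IsProbabilityMeasure μ] (hX : ∀ i, Measurable (X i))
    (hindep : iIndepFun X μ) {B : ι → Set ℝ} (hB : ∀ i, MeasurableSet (B i))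
    (htB : ∀ i, Iic t ⊆ B i) (a : ℝ) :
    ∫ ω in ⋂ i, X i ⁻¹' B i, (1 + a) ^ empiricalCount X t ω ∂μ
      = ∏ i, (μ.real (X i ⁻¹' B i) + a * μ.real (X i ⁻¹' Iic t)) := by
  have h_factor : (⋂ i, X i ⁻¹' B i).indicator (fun ω ↦ (1 + a) ^ empiricalCount X t ω)
      = fun ω ↦ ∏ i, (B i).indicator (fun x ↦ if x ≤ t then 1 + a else 1) (X i ω) := by
    ext ω
    simp_rw [pow_empiricalCount, ← indicator_comp_right (s := B _), prod_indicator_apply]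
    simp [Finset.prod_fn, Function.comp_def]
  rw [← integral_indicator (.iInter fun i ↦ hX i (hB i)), h_factor,
    hindep.integral_fun_prod_comp (fun i ↦ (hX i).aemeasurable) fun i ↦
      ((Measurable.ite measurableSet_Iic measurable_const measurable_const).indicator
        (hB i)).aestronglyMeasurable]
  exact Finset.prod_congr rfl fun i _ ↦ integral_indicator_ite_le (hX i) (hB i) (htB i) a

end EmpiricalCount

section EmpiricalTilt

variable {Ω ι : Type*} [Fintype ι] {m : MeasurableSpace Ω} {μ : Measure Ω} {X : ι → Ω → ℝ}
  {F : ℝ → ℝ} {lam t₀ t : ℝ}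

/-- This is `M_λ(t)`. -/
noncomputable def empiricalTilt (X : ι → Ω → ℝ) (F : ℝ → ℝ) (lam t : ℝ) (ω : Ω) : ℝ :=
  ((1 + lam) ^ Fintype.card ι)⁻¹ * (1 + lam / F t) ^ empiricalCount X t ω

lemma measurable_empiricalTilt (hX : ∀ i, MeasurableSet {ω | X i ω ≤ t}) :
    Measurable (empiricalTilt X F lam t) :=
  measurable_const.mul (measurable_from_top.comp (measurable_empiricalCount hX))

lemma integrable_empiricalTilt [IsFiniteMeasure μ] (hX : ∀ i, Measurable (X i)) :
    Integrable (empiricalTilt X F lam t) μ :=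
  (integrable_pow_empiricalCount hX _).const_mul _

lemma setIntegral_empiricalTilt [IsProbabilityMeasure μ] (hX : ∀ i, Measurable (X i))
    (hindep : iIndepFun X μ) (hF : ∀ i t, F t = μ.real (X i ⁻¹' Iic t)) (hFt₀ : 0 < F t₀)
    (ht : t₀ ≤ t) {B : ι → Set ℝ} (hB : ∀ i, MeasurableSet (B i)) (htB : ∀ i, Iic t ⊆ B i) :
    ∫ ω in ⋂ i, X i ⁻¹' B i, empiricalTilt X F lam t ω ∂μ
      = ((1 + lam) ^ Fintype.card ι)⁻¹ * ∏ i, (μ.real (X i ⁻¹' B i) + lam) := by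
  simp_rw [empiricalTilt]
  rw [integral_const_mul, setIntegral_pow_empiricalCount hX hindep hB htB]
  refine congrArg _ (Finset.prod_congr rfl fun i _ ↦ ?_)
  have hFt : 0 < F t := hFt₀.trans_le <| by
    rw [hF i, hF i]
    exact measureReal_mono (Iic_subset_Iic.2 ht |> preimage_mono)
  rw [← hF i t, div_mul_cancel₀ _ hFt.ne']

lemma integral_empiricalTilt [IsProbabilityMeasure μ] (hX : ∀ i, Measurable (X i))
    (hindep : iIndepFun X μ) (hF : ∀ i t, F t = μ.real (X i ⁻¹' Iic t)) (hFt₀ : 0 < F t₀)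
    (ht : t₀ ≤ t) (hlam : 1 + lam ≠ 0) :
    ∫ ω, empiricalTilt X F lam t ω ∂μ = 1 := by
  have h := setIntegral_empiricalTilt (lam := lam) hX hindep hF hFt₀ ht (B := fun _ ↦ univ)
    (fun _ ↦ .univ) fun _ ↦ subset_univ _
  simp only [preimage_univ, iInter_univ, Measure.restrict_univ, probReal_univ,
    Finset.prod_const, Finset.card_univ] at h
  rw [h, inv_mul_cancel₀ (pow_ne_zero _ hlam)]

theorem condExp_empiricalTilt [IsProbabilityMeasure μ] (hX : ∀ i, Measurable (X i))
    (hindep : iIndepFun X μ) (hF : ∀ i t, F t = μ.real (X i ⁻¹' Iic t)) (hFt₀ : 0 < F t₀)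
    {s₀ s₁ : ℝ} (hs₀ : t₀ ≤ s₀) (hs : s₀ ≤ s₁) :
    μ[empiricalTilt X F lam s₀ | MeasurableSpace.generateFrom
        {A | ∃ (i : ι) (r : ℝ), s₁ ≤ r ∧ A = {ω | X i ω ≤ r}}]
      =ᵐ[μ] empiricalTilt X F lam s₁ := by
  set G := MeasurableSpace.generateFrom {A | ∃ (i : ι) (r : ℝ), s₁ ≤ r ∧ A = {ω | X i ω ≤ r}}
  have hle : G ≤ m := MeasurableSpace.generateFrom_le fun _ ⟨i, r, _, hA⟩ ↦
    hA ▸ measurableSet_le (hX i) measurable_const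
  have h_cylinder : ∀ B : ι → Set ℝ, (∀ i, MeasurableSet (B i) ∧ Iic s₁ ⊆ B i) →
      ∫ ω in ⋂ i, X i ⁻¹' B i, empiricalTilt X F lam s₁ ω ∂μ
        = ∫ ω in ⋂ i, X i ⁻¹' B i, empiricalTilt X F lam s₀ ω ∂μ := fun B hB ↦ by
    rw [setIntegral_empiricalTilt hX hindep hF hFt₀ (hs₀.trans hs) (fun i ↦ (hB i).1)
      fun i ↦ (hB i).2, setIntegral_empiricalTilt hX hindep hF hFt₀ hs₀ (fun i ↦ (hB i).1)
      fun i ↦ (Iic_subset_Iic.2 hs).trans (hB i).2]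
  refine (ae_eq_condExp_of_forall_setIntegral_eq_of_isPiSystem hle
    generateFrom_generatePiSystem_eq.symm (isPiSystem_generatePiSystem _)
    (integrable_empiricalTilt hX) (integrable_empiricalTilt hX) ?_ ?_ ?_).symm
  · exact (measurable_empiricalTilt (m := G) fun i ↦
      MeasurableSpace.measurableSet_generateFrom ⟨i, s₁, le_rfl, rfl⟩).stronglyMeasurable
  · intro A hA
    obtain ⟨B, hB, rfl⟩ := generatePiSystem_subset_cylindersAbove X s₁ hA
    exact h_cylinder B hB
  · simpa using h_cylinder (fun _ ↦ univ) fun _ ↦ ⟨.univ, subset_univ _⟩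

end EmpiricalTilt

theorem reverse_martingale_M_general
    {Ω : Type*} [MeasureSpace Ω] [IsProbabilityMeasure (ℙ : Measure Ω)]
    (n : ℕ) (X : Fin n → Ω → ℝ)
    (hmeas : ∀ i, Measurable (X i))
    (hindep : iIndepFun X ℙ)
    (F : ℝ → ℝ) (hF : ∀ i t, F t = (ℙ {ω | X i ω ≤ t}).toReal)
    (t₀ : ℝ) (hFt₀ : 0 < F t₀) (lam : ℝ) (hlam : 0 ≤ lam)
    (G : ℝ → MeasurableSpace Ω)
    (hG : ∀ t, G t = MeasurableSpace.generateFrom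
        {A : Set Ω | ∃ (i : Fin n) (s : ℝ), t ≤ s ∧ A = {ω | X i ω ≤ s}})
    (M : ℝ → Ω → ℝ)
    (hM : ∀ t ω, M t ω = ((1 + lam) ^ n)⁻¹ *
        (1 + lam / F t) ^ (∑ i, if X i ω ≤ t then 1 else 0 : ℕ)) :
    (∀ s₀ s₁ : ℝ, t₀ ≤ s₀ → s₀ < s₁ →
        (ℙ[M s₀ | G s₁]) =ᵐ[ℙ] M s₁)
    ∧ (∀ t : ℝ, t₀ ≤ t → ∫ ω, M t ω ∂ℙ = 1) := by
  have hM' : M = empiricalTilt X F lam := by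
    ext t ω
    rw [hM, empiricalTilt, Fintype.card_fin, empiricalCount]
  subst hM'
  refine ⟨fun s₀ s₁ hs₀ hs₀₁ ↦ ?_, fun t ht ↦
    integral_empiricalTilt hmeas hindep hF hFt₀ ht (by positivity)⟩
  rw [hG]
  exact condExp_empiricalTilt hmeas hindep hF hFt₀ hs₀ hs₀₁.le

/-- **Lemma 1** (reverse martingale property): if `F(t₀) > 0` and `λ ≥ 0`, then
`M_λ(t) = (1+λ)^{-n} (1 + λ/F(t))^{n F̂_n(t)}` is a reverse martingale with respect
to the reverse filtration `(G_t)_{t ≥ t₀}`, i.e. `E[M_λ(s₀) | G_{s₁}] = M_λ(s₁)` a.s.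
for `t₀ ≤ s₀ < s₁`; moreover `E[M_λ(t)] = 1` for all `t ≥ t₀`. -/
theorem reverse_martingale_M
    {Ω : Type*} [MeasureSpace Ω] [IsProbabilityMeasure (ℙ : Measure Ω)]
    (n : ℕ) (hn : 0 < n) (X : Fin n → Ω → ℝ)
    (hmeas : ∀ i, Measurable (X i))
    (hindep : iIndepFun X ℙ)
    (hident : ∀ i j, IdentDistrib (X i) (X j) ℙ ℙ)
    (F : ℝ → ℝ) (hF : ∀ i t, F t = (ℙ {ω | X i ω ≤ t}).toReal)
    (t₀ : ℝ) (hFt₀ : 0 < F t₀) (lam : ℝ) (hlam : 0 ≤ lam)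
    (G : ℝ → MeasurableSpace Ω)
    (hG : ∀ t, G t = MeasurableSpace.generateFrom
        {A : Set Ω | ∃ (i : Fin n) (s : ℝ), t ≤ s ∧ A = {ω | X i ω ≤ s}})
    (M : ℝ → Ω → ℝ)
    (hM : ∀ t ω, M t ω = ((1 + lam) ^ n)⁻¹ *
        (1 + lam / F t) ^ (∑ i, if X i ω ≤ t then 1 else 0 : ℕ)) :
    (∀ s₀ s₁ : ℝ, t₀ ≤ s₀ → s₀ < s₁ →
        (ℙ[M s₀ | G s₁]) =ᵐ[ℙ] M s₁)
    ∧ (∀ t : ℝ, t₀ ≤ t → ∫ ω, M t ω ∂ℙ = 1) :=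
  reverse_martingale_M_general n X hmeas hindep F hF t₀ hFt₀ lam hlam G hG M hM
end

section
/- For every λ > 0 and δ ∈ (0,1), P( for all t ∈ ℝ with F(t) > 0: F̂ₙ(t) − F(t) ≤ Δ_{ε(n,δ)}(F(t), λ) ) ≥ 1 − δ. -/
open MeasureTheory ProbabilityTheory Real

/-- `Δ_ε(r, λ) = (log(1+λ) + ε)/log(1 + λ/r) - r`. -/
noncomputable def DeltaEps (ε r lam : ℝ) : ℝ :=
  (Real.log (1 + lam) + ε) / Real.log (1 + lam / r) - r

/-!
Write `S(t) = #{i | Xᵢ ≤ t}` and `C = (1 + λ)ⁿ / δ`. The inequality fails at `t` exactly when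
`(1 + λ / F t) ^ S(t) > C`. For fixed `t` this is a product of `n` independent factors of mean
`1 + λ`, and as `t` decreases it is a reverse martingale, so Ville's maximal inequality bounds the
probability that it ever exceeds `C` by `(1 + λ)ⁿ / C = δ`.

To stay finite, note that a crossing with `S(t) = k` forces `F t` below an explicit threshold
`r k`; cutting the range of `F` at `r 1 ≤ ⋯ ≤ r n` discretises each `Xᵢ` into `n + 1` levels. On
the resulting finite product space the maximal inequality is proved by optional stopping at the
last level where the process exceeds `C`.
-/

open Finset

theorem measure_le_of_isLowerSet {α : Type*} [ConditionallyCompleteLinearOrder α]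
    [TopologicalSpace α] [OrderTopology α] [SecondCountableTopology α] [MeasurableSpace α]
    {μ : Measure α} {T : Set α} (hT : IsLowerSet T) {c : ENNReal}
    (hc : ∀ x ∈ T, μ (Set.Iic x) ≤ c) : μ T ≤ c := by
  have : T.OrdConnected := hT.ordConnected
  have hU : T = ⋃ x : T, Set.Iic (x : α) := by
    ext y
    simp only [Set.mem_iUnion, Set.mem_Iic, Subtype.exists, exists_prop]
    exact ⟨fun hy => ⟨y, hy, le_rfl⟩, fun ⟨x, hx, hyx⟩ => hT hyx hx⟩
  rw [hU, Monotone.measure_iUnion (s := fun x : T => Set.Iic (x : α))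
    fun x y hxy => Set.Iic_subset_Iic.2 hxy]
  exact iSup_le fun x => hc x x.2

theorem mul_div_le_mul_div_of_le {K : Type*} [Field K] [LinearOrder K] [IsStrictOrderedRing K]
    {lam p p' : K} (hlam : 0 ≤ lam) (hp : 0 ≤ p) (hpp' : p ≤ p') :
    p * (lam / p) ≤ p' * (lam / p') := by
  rcases hp.eq_or_lt with rfl | hp
  · simp only [div_zero, mul_zero]
    exact mul_nonneg (hp.trans hpp') (div_nonneg hlam (hp.trans hpp'))
  · rw [mul_div_cancel₀ _ hp.ne', mul_div_cancel₀ _ (hp.trans_le hpp').ne']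

theorem mul_div_le_of_nonneg {K : Type*} [Field K] [LinearOrder K] [IsStrictOrderedRing K]
    {lam p : K} (hlam : 0 ≤ lam) : p * (lam / p) ≤ lam := by
  rcases eq_or_ne p 0 with rfl | hp
  · simpa using hlam
  · rw [mul_div_cancel₀ _ hp]

theorem sum_filter_comp_eq_prod_sum {ι α β R : Type*} [Fintype ι] [DecidableEq ι] [Fintype α]
    [DecidableEq β] [CommSemiring R] (f : α → β) (h : α → R) (u : ι → β) :
    ∑ v : ι → α with f ∘ v = u, ∏ i, h (v i) = ∏ i, ∑ a with f a = u i, h a := by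
  rw [prod_univ_sum]
  congr 1
  ext v
  simp [Fintype.mem_piFinset, funext_iff]

theorem sum_filter_prod_le_of_sum_fiber_le {ι α β R : Type*} [Fintype ι] [DecidableEq ι]
    [Fintype α] [DecidableEq β] [CommSemiring R] [PartialOrder R] [IsOrderedRing R]
    (f : α → β) {h₁ h₂ : α → R} (h₁_nonneg : ∀ a, 0 ≤ h₁ a)
    (hle : ∀ b, ∑ a with f a = b, h₁ a ≤ ∑ a with f a = b, h₂ a)
    (P : (ι → β) → Prop) [DecidablePred P] :
    ∑ v : ι → α with P (f ∘ v), ∏ i, h₁ (v i) ≤ ∑ v : ι → α with P (f ∘ v), ∏ i, h₂ (v i) := by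
  have hmaps : ∀ v ∈ (univ : Finset (ι → α)), f ∘ v ∈ (univ : Finset (ι → α)).image (f ∘ ·) := by
    simp
  simp only [sum_filter]
  rw [← sum_fiberwise_of_maps_to hmaps, ← sum_fiberwise_of_maps_to hmaps]
  refine sum_le_sum fun u _ => ?_
  by_cases hPu : P u
  · have hP : ∀ v ∈ ({v | f ∘ v = u} : Finset (ι → α)), P (f ∘ v) := fun v hv => by
      rwa [(mem_filter.1 hv).2]
    rw [sum_ite_of_true hP, sum_ite_of_true hP, sum_filter_comp_eq_prod_sum,
      sum_filter_comp_eq_prod_sum]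
    exact prod_le_prod (fun i _ => sum_nonneg fun a _ => h₁_nonneg a) fun i _ => hle (u i)
  · have hP : ∀ v ∈ ({v | f ∘ v = u} : Finset (ι → α)), ¬ P (f ∘ v) := fun v hv => by
      rwa [(mem_filter.1 hv).2]
    rw [sum_ite_of_false hP, sum_ite_of_false hP]

section LikelihoodRatio

variable {ι : Type*} [Fintype ι] {m : ℕ} (q : Fin m → ℝ) (lam : ℝ)

noncomputable def massBelow (k : ℕ) : ℝ := ∑ j ∈ ({j | (j : ℕ) < k} : Finset (Fin m)), q j

-- At a level of mass zero `lam / 0 = 0` makes the factor `1`; this is why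
-- `sum_weight_mul_lrProcess_le_succ` is only an inequality.
noncomputable def lrFactor (k a : ℕ) : ℝ := 1 + if a < k then lam / massBelow q k else 0

noncomputable def lrProcess (k : ℕ) (u : ι → ℕ) : ℝ := ∏ i, lrFactor q lam k (u i)

variable {q lam}

theorem massBelow_nonneg (hq : ∀ j, 0 ≤ q j) (k : ℕ) : 0 ≤ massBelow q k :=
  sum_nonneg fun j _ => hq j

theorem massBelow_mono (hq : ∀ j, 0 ≤ q j) : Monotone (massBelow q) := fun _ _ hkk' =>
  sum_le_sum_of_subset_of_nonneg (fun j => by simp only [mem_filter_univ]; omega)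
    fun j _ _ => hq j

theorem lrFactor_nonneg (hq : ∀ j, 0 ≤ q j) (hlam : 0 ≤ lam) (k a : ℕ) :
    0 ≤ lrFactor q lam k a := by
  have := div_nonneg hlam (massBelow_nonneg hq k)
  unfold lrFactor
  split_ifs <;> linarith

theorem lrProcess_eq_pow (k : ℕ) (u : ι → ℕ) :
    lrProcess q lam k u = (1 + lam / massBelow q k) ^ #{i | u i < k} := by
  have h : ∀ i,
      lrFactor q lam k (u i) = (1 + lam / massBelow q k) ^ (if u i < k then 1 else 0) := by
    intro i
    simp only [lrFactor]
    split_ifs <;> simp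
  simp only [lrProcess, h, prod_pow_eq_pow_sum, card_filter]

theorem lrProcess_max_eq {j k : ℕ} (hkj : k < j) (u : ι → ℕ) :
    lrProcess q lam j (fun i => max (u i) k) = lrProcess q lam j u := by
  simp only [lrProcess, lrFactor, max_lt_iff, hkj, and_true]

theorem sum_mul_lrFactor {s : Finset (Fin m)} {k : ℕ} (hs : ∀ j : Fin m, (j : ℕ) < k → j ∈ s) :
    ∑ j ∈ s, q j * lrFactor q lam k j = ∑ j ∈ s, q j + massBelow q k * (lam / massBelow q k) := by
  have hfilter :
      s.filter (fun j : Fin m => (j : ℕ) < k) = ({j | (j : ℕ) < k} : Finset (Fin m)) := by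
    ext j
    simpa using hs j
  simp only [lrFactor, mul_add, mul_one, sum_add_distrib, mul_ite, mul_zero, sum_ite,
    sum_const_zero, add_zero, ← sum_mul, hfilter, massBelow]

theorem sum_fiber_mul_lrFactor_le (hq : ∀ j, 0 ≤ q j) (hlam : 0 ≤ lam) (k b : ℕ) :
    ∑ j : Fin m with max j.val k = b, q j * lrFactor q lam k j
      ≤ ∑ j : Fin m with max j.val k = b, q j * lrFactor q lam (k + 1) j := by
  rcases eq_or_ne b k with rfl | hb
  · have hmem : ∀ k' ≤ b + 1, ∀ j : Fin m, (j : ℕ) < k' →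
        j ∈ ({j | max j.val b = b} : Finset (Fin m)) := fun k' hk' j hj => by
      simp only [mem_filter_univ]
      omega
    rw [sum_mul_lrFactor (hmem b b.le_succ), sum_mul_lrFactor (hmem (b + 1) le_rfl)]
    exact add_le_add_right
      (mul_div_le_mul_div_of_le hlam (massBelow_nonneg hq b) (massBelow_mono hq b.le_succ)) _
  · refine (sum_congr rfl fun j hj => ?_).le
    have hkj : k < (j : ℕ) := by
      have := (mem_filter_univ _).1 hj
      omega
    simp only [lrFactor, if_neg (show ¬ (j : ℕ) < k by omega),
      if_neg (show ¬ (j : ℕ) < k + 1 by omega)]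

theorem weight_mul_lrProcess (k : ℕ) (v : ι → Fin m) :
    (∏ i, q (v i)) * lrProcess q lam k (Fin.val ∘ v) = ∏ i, q (v i) * lrFactor q lam k (v i) :=
  prod_mul_distrib.symm

variable [DecidableEq ι]

theorem sum_weight_mul_lrProcess_le (hq : ∀ j, 0 ≤ q j) (hq1 : ∑ j, q j = 1) (hlam : 0 ≤ lam)
    (k : ℕ) :
    ∑ v : ι → Fin m, (∏ i, q (v i)) * lrProcess q lam k (Fin.val ∘ v)
      ≤ (1 + lam) ^ Fintype.card ι := by
  simp only [weight_mul_lrProcess]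
  rw [← Fintype.prod_sum (fun _ j => q j * lrFactor q lam k j), prod_const, card_univ,
    sum_mul_lrFactor fun j _ => mem_univ j, hq1]
  have hp := massBelow_nonneg hq k
  exact pow_le_pow_left₀ (add_nonneg zero_le_one (mul_nonneg hp (div_nonneg hlam hp)))
    (add_le_add_right (mul_div_le_of_nonneg hlam) 1) _

-- The events `P (max v k)` are those that only see the levels above `k`: this is the
-- reverse-martingale step of `lrProcess`.
theorem sum_weight_mul_lrProcess_le_succ (hq : ∀ j, 0 ≤ q j) (hlam : 0 ≤ lam)
    (k : ℕ) (P : (ι → ℕ) → Prop) [DecidablePred P] :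
    ∑ v : ι → Fin m with P (fun i => max (v i : ℕ) k),
        (∏ i, q (v i)) * lrProcess q lam k (Fin.val ∘ v)
      ≤ ∑ v : ι → Fin m with P (fun i => max (v i : ℕ) k),
          (∏ i, q (v i)) * lrProcess q lam (k + 1) (Fin.val ∘ v) := by
  simp only [weight_mul_lrProcess]
  exact sum_filter_prod_le_of_sum_fiber_le (fun j : Fin m => max (j : ℕ) k)
    (fun j => mul_nonneg (hq j) (lrFactor_nonneg hq hlam k j))
    (sum_fiber_mul_lrFactor_le hq hlam k) P

end LikelihoodRatio

section Stopping

variable {ι : Type*} [Fintype ι] {m : ℕ} (q : Fin m → ℝ) (lam : ℝ) (K : Finset ℕ) (C : ℝ)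

noncomputable def lastCrossing (u : ι → ℕ) : ℕ := {k ∈ K | C ≤ lrProcess q lam k u}.sup id

noncomputable def stoppedLR (k : ℕ) (u : ι → ℕ) : ℝ :=
  lrProcess q lam (max (lastCrossing q lam K C u) k) u

variable {q lam K C}

theorem lastCrossing_le_iff {u : ι → ℕ} {k : ℕ} :
    lastCrossing q lam K C u ≤ k ↔ ∀ j ∈ K, k < j → lrProcess q lam j u < C := by
  simp only [lastCrossing, Finset.sup_le_iff, mem_filter, id]
  exact ⟨fun h j hj hkj => lt_of_not_ge fun hC => (h j ⟨hj, hC⟩).not_gt hkj,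
    fun h j ⟨hj, hC⟩ => le_of_not_gt fun hkj => (h j hj hkj).not_ge hC⟩

theorem lastCrossing_le_sup (u : ι → ℕ) : lastCrossing q lam K C u ≤ K.sup id :=
  sup_mono (filter_subset _ _)

theorem le_lrProcess_lastCrossing {u : ι → ℕ} (h : ∃ k ∈ K, C ≤ lrProcess q lam k u) :
    C ≤ lrProcess q lam (lastCrossing q lam K C u) u := by
  obtain ⟨k, hk, hsup⟩ := exists_mem_eq_sup _
    (h.imp fun k hk => mem_filter.2 hk : {k ∈ K | C ≤ lrProcess q lam k u}.Nonempty) id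
  rw [lastCrossing, hsup]
  exact (mem_filter.1 hk).2

theorem stoppedLR_nonneg (hq : ∀ j, 0 ≤ q j) (hlam : 0 ≤ lam) (k : ℕ) (u : ι → ℕ) :
    0 ≤ stoppedLR q lam K C k u :=
  prod_nonneg fun _ _ => lrFactor_nonneg hq hlam _ _

variable [DecidableEq ι]

theorem monotone_sum_weight_mul_stoppedLR (hq : ∀ j, 0 ≤ q j) (hlam : 0 ≤ lam) :
    Monotone fun k => ∑ v : ι → Fin m, (∏ i, q (v i)) * stoppedLR q lam K C k (Fin.val ∘ v) := by
  refine monotone_nat_of_le_succ fun k => ?_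
  let P : (ι → ℕ) → Prop := fun u => ∀ j ∈ K, k < j → lrProcess q lam j u < C
  have hP : ∀ v : ι → Fin m,
      lastCrossing q lam K C (Fin.val ∘ v) ≤ k ↔ P (fun i => max (v i : ℕ) k) := by
    intro v
    rw [lastCrossing_le_iff]
    exact forall₂_congr fun j _ => imp_congr_right fun hkj => by
      rw [lrProcess_max_eq hkj]
      rfl
  classical
  rw [← sum_filter_add_sum_filter_not univ (fun v => lastCrossing q lam K C (Fin.val ∘ v) ≤ k),
    ← sum_filter_add_sum_filter_not univ (fun v => lastCrossing q lam K C (Fin.val ∘ v) ≤ k)]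
  refine add_le_add ?_ (sum_congr rfl fun v hv => ?_).le
  · have hfilter : ({v | lastCrossing q lam K C (Fin.val ∘ v) ≤ k} : Finset (ι → Fin m))
        = ({v | P (fun i => max (v i : ℕ) k)} : Finset (ι → Fin m)) :=
      filter_congr fun v _ => hP v
    calc _ = ∑ v with lastCrossing q lam K C (Fin.val ∘ v) ≤ k,
            (∏ i, q (v i)) * lrProcess q lam k (Fin.val ∘ v) :=
          sum_congr rfl fun v hv => by rw [stoppedLR, max_eq_right (mem_filter.1 hv).2]
      _ ≤ ∑ v with lastCrossing q lam K C (Fin.val ∘ v) ≤ k,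
            (∏ i, q (v i)) * lrProcess q lam (k + 1) (Fin.val ∘ v) := by
          rw [hfilter]
          exact sum_weight_mul_lrProcess_le_succ hq hlam k P
      _ = _ := sum_congr rfl fun v hv => by
          rw [stoppedLR, max_eq_right ((mem_filter.1 hv).2.trans k.le_succ)]
  · have hk := not_le.1 (mem_filter.1 hv).2
    rw [stoppedLR, stoppedLR, max_eq_left hk.le, max_eq_left hk]

theorem lrProcess_maximal_ineq (hq : ∀ j, 0 ≤ q j) (hq1 : ∑ j, q j = 1) (hlam : 0 ≤ lam)
    (K : Finset ℕ) (C : ℝ) :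
    C * ∑ v : ι → Fin m with ∃ k ∈ K, C ≤ lrProcess q lam k (Fin.val ∘ v), ∏ i, q (v i)
      ≤ (1 + lam) ^ Fintype.card ι := by
  have hw : ∀ v : ι → Fin m, 0 ≤ ∏ i, q (v i) := fun v => prod_nonneg fun i _ => hq (v i)
  calc C * ∑ v : ι → Fin m with ∃ k ∈ K, C ≤ lrProcess q lam k (Fin.val ∘ v), ∏ i, q (v i)
      ≤ ∑ v : ι → Fin m with ∃ k ∈ K, C ≤ lrProcess q lam k (Fin.val ∘ v),
          (∏ i, q (v i)) * stoppedLR q lam K C 0 (Fin.val ∘ v) := by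
        rw [mul_sum]
        refine sum_le_sum fun v hv => ?_
        rw [mul_comm, stoppedLR, max_eq_left (Nat.zero_le _)]
        exact mul_le_mul_of_nonneg_left (le_lrProcess_lastCrossing (mem_filter.1 hv).2) (hw v)
    _ ≤ ∑ v : ι → Fin m, (∏ i, q (v i)) * stoppedLR q lam K C 0 (Fin.val ∘ v) :=
        sum_le_sum_of_subset_of_nonneg (filter_subset _ _)
          fun v _ _ => mul_nonneg (hw v) (stoppedLR_nonneg hq hlam _ _)
    _ ≤ ∑ v : ι → Fin m, (∏ i, q (v i)) * stoppedLR q lam K C (K.sup id) (Fin.val ∘ v) :=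
        monotone_sum_weight_mul_stoppedLR hq hlam (Nat.zero_le _)
    _ = ∑ v : ι → Fin m, (∏ i, q (v i)) * lrProcess q lam (K.sup id) (Fin.val ∘ v) :=
        sum_congr rfl fun v _ => by rw [stoppedLR, max_eq_right (lastCrossing_le_sup _)]
    _ ≤ (1 + lam) ^ Fintype.card ι := sum_weight_mul_lrProcess_le hq hq1 hlam _

end Stopping

theorem measure_mem_finset_eq_sum_prod {Ω ι α : Type*} [MeasurableSpace Ω] {P : Measure Ω}
    [IsProbabilityMeasure P] [Fintype ι] [Fintype α] [MeasurableSpace α]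
    [MeasurableSingletonClass α] {Y : ι → Ω → α} (hY : ∀ i, Measurable (Y i))
    (hind : iIndepFun Y P) (A : Finset (ι → α)) :
    P {ω | (fun i => Y i ω) ∈ A} = ∑ v ∈ A, ∏ i, P.map (Y i) {v i} := by
  have hlaw := (iIndepFun_iff_map_fun_eq_pi_map fun i => (hY i).aemeasurable).1 hind
  calc P {ω | (fun i => Y i ω) ∈ A} = P.map (fun ω i => Y i ω) A :=
        (Measure.map_apply (measurable_pi_lambda _ hY) A.measurableSet).symm
    _ = ∑ v ∈ A, ∏ i, P.map (Y i) {v i} := by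
        rw [hlaw, ← sum_measure_singleton]
        simp only [Measure.pi_singleton]

theorem massBelow_measureReal {m : ℕ} (ν : Measure (Fin m)) [IsFiniteMeasure ν] (k : ℕ) :
    massBelow (fun j => ν.real {j}) k = ν.real {j | (j : ℕ) < k} := by
  rw [massBelow, sum_measureReal_singleton, coe_filter_univ]

theorem measure_exists_le_lrProcess_le {Ω ι : Type*} [MeasurableSpace Ω] {P : Measure Ω}
    [IsProbabilityMeasure P] [Fintype ι] [DecidableEq ι] {m : ℕ} {Y : ι → Ω → Fin m}
    (hY : ∀ i, Measurable (Y i)) (hind : iIndepFun Y P) {ν : Measure (Fin m)}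
    [IsProbabilityMeasure ν] (hν : ∀ i, P.map (Y i) = ν) {lam : ℝ} (hlam : 0 ≤ lam)
    (K : Finset ℕ) {C : ℝ} (hC : 0 < C) :
    P {ω | ∃ k ∈ K, C ≤ lrProcess (fun j => ν.real {j}) lam k (fun i => Y i ω)}
      ≤ ENNReal.ofReal ((1 + lam) ^ Fintype.card ι / C) := by
  have hq : ∀ j, 0 ≤ ν.real {j} := fun j => measureReal_nonneg
  have hq1 : ∑ j, ν.real {j} = 1 := by simp
  have hset := measure_mem_finset_eq_sum_prod hY hind
    {v | ∃ k ∈ K, C ≤ lrProcess (fun j => ν.real {j}) lam k (Fin.val ∘ v)}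
  simp only [mem_filter_univ, hν, Function.comp_def] at hset
  have hreal : ∀ v : ι → Fin m, ∏ i, ν {v i} = ENNReal.ofReal (∏ i, ν.real {v i}) := fun v => by
    rw [ENNReal.ofReal_prod_of_nonneg fun _ _ => hq _]
    exact prod_congr rfl fun i _ => (ofReal_measureReal).symm
  rw [hset, sum_congr rfl fun v _ => hreal v,
    ← ENNReal.ofReal_sum_of_nonneg fun _ _ => prod_nonneg fun _ _ => hq _]
  exact ENNReal.ofReal_le_ofReal ((le_div_iff₀' hC).2 (lrProcess_maximal_ineq hq hq1 hlam K C))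

theorem measure_cdf_lt_le (μ : Measure ℝ) [IsProbabilityMeasure μ] (r : ℝ) :
    μ {x | cdf μ x < r} ≤ ENNReal.ofReal r :=
  measure_le_of_isLowerSet (fun _ _ hxy hy => (monotone_cdf μ hxy).trans_lt hy)
    fun x (hx : cdf μ x < r) => ofReal_cdf μ x ▸ ENNReal.ofReal_le_ofReal hx.le

theorem sub_le_deltaEps_iff {ε F lam N S : ℝ} (hF : 0 < F) (hlam : 0 < lam) (hN : 0 < N) :
    N⁻¹ * S - F ≤ DeltaEps ε F lam ↔ S * log (1 + lam / F) ≤ N * (log (1 + lam) + ε) := by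
  rw [DeltaEps, sub_le_sub_iff_right, le_div_iff₀ (log_pos (by simp [hlam, hF])), mul_assoc,
    inv_mul_le_iff₀ hN]

section Thresholds

variable {lam a : ℝ}

-- The value of `F` at which `(1 + lam / F) ^ k = exp a`.
noncomputable def threshold (lam a : ℝ) (k : ℕ) : ℝ := lam / (exp (a / k) - 1)

theorem one_lt_exp_div (ha : 0 < a) {k : ℕ} (hk : 0 < k) : 1 < exp (a / k) :=
  one_lt_exp_iff.2 (div_pos ha (Nat.cast_pos.2 hk))

theorem threshold_nonneg (hlam : 0 ≤ lam) (ha : 0 ≤ a) (k : ℕ) : 0 ≤ threshold lam a k :=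
  div_nonneg hlam (sub_nonneg.2 (one_le_exp (div_nonneg ha k.cast_nonneg)))

theorem monotone_threshold (hlam : 0 ≤ lam) (ha : 0 < a) : Monotone (threshold lam a) := by
  intro k k' hkk'
  rcases Nat.eq_zero_or_pos k with rfl | hk
  · simpa [threshold] using threshold_nonneg hlam ha.le k'
  · refine div_le_div_of_nonneg_left hlam (sub_pos.2 (one_lt_exp_div ha (hk.trans_le hkk'))) ?_
    gcongr

theorem lt_threshold_iff (hlam : 0 < lam) (ha : 0 < a) {k : ℕ} (hk : 0 < k) {F : ℝ}
    (hF : 0 < F) : F < threshold lam a k ↔ a < k * log (1 + lam / F) := by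
  have hk' : (0 : ℝ) < k := Nat.cast_pos.2 hk
  rw [threshold, lt_div_iff₀ (sub_pos.2 (one_lt_exp_div ha hk)), ← div_lt_iff₀' hk',
    lt_log_iff_exp_lt (by positivity), ← sub_lt_iff_lt_add', lt_div_iff₀ hF, mul_comm]

theorem exp_le_one_add_div_pow (hlam : 0 < lam) {k N : ℕ} (hk : 0 < k) (hkN : k ≤ N) {p : ℝ}
    (hp : 0 < p) (hpk : p ≤ threshold lam a k) : exp a ≤ (1 + lam / p) ^ N := by
  have hbase : 1 + lam / threshold lam a k = exp (a / k) := by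
    rw [threshold, div_div_cancel₀ hlam.ne', add_sub_cancel]
  calc exp a = (1 + lam / threshold lam a k) ^ k := by
        rw [hbase, ← exp_nat_mul, mul_div_cancel₀ _ (Nat.cast_ne_zero.2 hk.ne')]
    _ ≤ (1 + lam / p) ^ k := by
        gcongr
        rw [hbase]
        exact (exp_pos _).le
    _ ≤ (1 + lam / p) ^ N :=
        pow_le_pow_right₀ (le_add_of_nonneg_right (div_nonneg hlam.le hp.le)) hkN

end Thresholds

section Levels

variable (r : ℕ → ℝ) (n : ℕ)

noncomputable def levelOf (y : ℝ) : Fin (n + 1) :=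
  ⟨#{k ∈ Icc 1 n | r k ≤ y}, Nat.lt_succ_of_le ((card_filter_le _ _).trans (by simp))⟩

theorem monotone_levelOf : Monotone (levelOf r n) := fun _ _ hyy' =>
  Fin.mk_le_mk.2 (card_le_card fun k hk => by
    rw [mem_filter] at hk ⊢
    exact ⟨hk.1, hk.2.trans hyy'⟩)

variable {r n}

theorem levelOf_lt_iff (hr : Monotone r) {k : ℕ} (hk : k ∈ Icc 1 n) (y : ℝ) :
    (levelOf r n y : ℕ) < k ↔ y < r k := by
  obtain ⟨hk1, hkn⟩ := mem_Icc.1 hk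
  simp only [levelOf]
  constructor
  · refine fun h => lt_of_not_ge fun hky => h.not_ge ?_
    have hsub : Icc 1 k ⊆ {j ∈ Icc 1 n | r j ≤ y} := fun j hj => by
      obtain ⟨hj1, hjk⟩ := mem_Icc.1 hj
      exact mem_filter.2 ⟨mem_Icc.2 ⟨hj1, hjk.trans hkn⟩, (hr hjk).trans hky⟩
    simpa using card_le_card hsub
  · intro hy
    have hsub : {j ∈ Icc 1 n | r j ≤ y} ⊆ Ico 1 k := fun j hj => by
      obtain ⟨hj, hjy⟩ := mem_filter.1 hj
      exact mem_Ico.2 ⟨(mem_Icc.1 hj).1, lt_of_not_ge fun hkj => (hy.trans_le (hr hkj)).not_ge hjy⟩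
    have := card_le_card hsub
    simp only [Nat.card_Ico] at this
    omega

end Levels

theorem exists_le_lrProcess_of_crossing (μ : Measure ℝ) [IsProbabilityMeasure μ] {lam a : ℝ}
    (hlam : 0 < lam) (ha : 0 < a) {n : ℕ} (x : Fin n → ℝ) {t : ℝ} (ht : 0 < cdf μ t)
    (hcross : a < #{i | x i ≤ t} * log (1 + lam / cdf μ t)) :
    ∃ k ∈ Icc 1 n, exp a ≤ lrProcess
      (fun j => (μ.map (levelOf (threshold lam a) n ∘ cdf μ)).real {j}) lam k
      (fun i => (levelOf (threshold lam a) n (cdf μ (x i)) : ℕ)) := by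
  set r := threshold lam a
  set S := #{i | x i ≤ t}
  have hS : 0 < S := Nat.pos_of_ne_zero fun h => by
    rw [h, Nat.cast_zero, zero_mul] at hcross
    exact ha.not_gt hcross
  have hSK : S ∈ Icc 1 n := mem_Icc.2 ⟨hS, (card_filter_le _ _).trans_eq (card_fin n)⟩
  have htr : cdf μ t < r S := (lt_threshold_iff hlam ha hS ht).2 hcross
  have hlevel := levelOf_lt_iff (monotone_threshold hlam.le ha) hSK
  have hmass : massBelow (fun j => (μ.map (levelOf r n ∘ cdf μ)).real {j}) S
      = μ.real {y | cdf μ y < r S} := by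
    rw [massBelow_measureReal, map_measureReal_apply
      ((monotone_levelOf r n).comp (monotone_cdf μ)).measurable MeasurableSet.of_discrete]
    exact congrArg μ.real (Set.ext fun y => hlevel (cdf μ y))
  refine ⟨S, hSK, ?_⟩
  rw [lrProcess_eq_pow]
  refine exp_le_one_add_div_pow hlam hS ?_ (ht.trans_le ?_) ?_
  · exact card_le_card fun i hi => mem_filter.2 ⟨mem_univ i,
      (hlevel _).2 ((monotone_cdf μ (mem_filter.1 hi).2).trans_lt htr)⟩
  · rw [hmass, cdf_eq_real]
    exact measureReal_mono fun y hy => (monotone_cdf μ hy).trans_lt htr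
  · rw [hmass]
    exact ENNReal.toReal_le_of_le_ofReal (threshold_nonneg hlam.le ha.le S) (measure_cdf_lt_le μ _)

theorem measure_exists_crossing_le {Ω : Type*} [MeasurableSpace Ω] {P : Measure Ω}
    [IsProbabilityMeasure P] {n : ℕ} {X : Fin n → Ω → ℝ} (hmeas : ∀ i, Measurable (X i))
    (hindep : iIndepFun X P) {μ : Measure ℝ} [IsProbabilityMeasure μ]
    (hlaw : ∀ i, P.map (X i) = μ) {lam a : ℝ} (hlam : 0 < lam) (ha : 0 < a) :
    P {ω | ∃ t, 0 < cdf μ t ∧ a < #{i | X i ω ≤ t} * log (1 + lam / cdf μ t)}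
      ≤ ENNReal.ofReal ((1 + lam) ^ n / exp a) := by
  set L := levelOf (threshold lam a) n ∘ cdf μ
  have hL : Measurable L := ((monotone_levelOf _ n).comp (monotone_cdf μ)).measurable
  have : IsProbabilityMeasure (μ.map L) := Measure.isProbabilityMeasure_map hL.aemeasurable
  calc _ ≤ P {ω | ∃ k ∈ Icc 1 n, exp a ≤ lrProcess (fun j => (μ.map L).real {j}) lam k
          (fun i => ((L ∘ X i) ω : ℕ))} :=
        measure_mono fun ω (⟨t, ht, hcross⟩ : ∃ t, 0 < cdf μ t ∧ _) =>
          exists_le_lrProcess_of_crossing μ hlam ha (fun i => X i ω) ht hcross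
    _ ≤ ENNReal.ofReal ((1 + lam) ^ n / exp a) := by
        simpa using measure_exists_le_lrProcess_le (Y := fun i => L ∘ X i)
          (fun i => hL.comp (hmeas i)) (hindep.comp _ fun _ => hL)
          (fun i => by rw [← Measure.map_map hL (hmeas i), hlaw i]) hlam.le (Icc 1 n) (exp_pos a)

theorem ofReal_one_sub_le_of_measure_compl_le {α : Type*} [MeasurableSpace α] {μ : Measure α}
    [IsProbabilityMeasure μ] {s : Set α} {δ : ℝ} (hδ : 0 ≤ δ) (h : μ sᶜ ≤ ENNReal.ofReal δ) :
    ENNReal.ofReal (1 - δ) ≤ μ s := by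
  rw [ENNReal.ofReal_sub _ hδ, ENNReal.ofReal_one, tsub_le_iff_left]
  calc 1 = μ (sᶜ ∪ s) := by rw [Set.compl_union_self, measure_univ]
    _ ≤ μ sᶜ + μ s := measure_union_le _ _
    _ ≤ ENNReal.ofReal δ + μ s := add_le_add_left h _

/-- **Lemma 2**: for all `λ > 0` and `δ ∈ (0,1)`, with `ε(n,δ) = log(1/δ)/n`,
`P( ∀ t ∈ ℝ with F(t) > 0 : F̂_n(t) - F(t) ≤ Δ_{ε(n,δ)}(F(t), λ) ) ≥ 1 - δ`. -/
theorem dkwm_event_lemma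
    {Ω : Type*} [MeasureSpace Ω] [IsProbabilityMeasure (ℙ : Measure Ω)]
    (n : ℕ) (hn : 0 < n) (X : Fin n → Ω → ℝ)
    (hmeas : ∀ i, Measurable (X i))
    (hindep : iIndepFun X ℙ)
    (hident : ∀ i j, IdentDistrib (X i) (X j) ℙ ℙ)
    (F : ℝ → ℝ) (hF : ∀ i t, F t = (ℙ {ω | X i ω ≤ t}).toReal)
    (lam : ℝ) (hlam : 0 < lam) (δ : ℝ) (hδ0 : 0 < δ) (hδ1 : δ < 1) :
    ENNReal.ofReal (1 - δ)
      ≤ ℙ {ω | ∀ t : ℝ, 0 < F t →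
            (n : ℝ)⁻¹ * ∑ i, (if X i ω ≤ t then (1 : ℝ) else 0) - F t
              ≤ DeltaEps (Real.log (1 / δ) / n) (F t) lam} := by
  set μ : Measure ℝ := (ℙ : Measure Ω).map (X ⟨0, hn⟩)
  have : IsProbabilityMeasure μ := Measure.isProbabilityMeasure_map (hmeas _).aemeasurable
  have hFμ : ∀ t, F t = cdf μ t := fun t => by
    rw [cdf_eq_real, map_measureReal_apply (hmeas _) measurableSet_Iic, hF ⟨0, hn⟩ t]
    rfl
  have hnR : (0 : ℝ) < n := Nat.cast_pos.2 hn
  have hexp : exp (n * (log (1 + lam) + log (1 / δ) / n)) = (1 + lam) ^ n / δ := by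
    rw [mul_add, mul_div_cancel₀ _ hnR.ne', exp_add, exp_nat_mul, exp_log (by linarith),
      exp_log (by positivity), mul_one_div]
  have ha : 0 < n * (log (1 + lam) + log (1 / δ) / n) := one_lt_exp_iff.1
    (hexp ▸ (one_lt_div hδ0).2 (hδ1.trans_le (one_le_pow₀ (by linarith))))
  have hcross := measure_exists_crossing_le hmeas hindep (fun i => (hident i ⟨0, hn⟩).map_eq)
    hlam ha
  rw [hexp, div_div_cancel₀ (pow_pos (by linarith) n).ne'] at hcross
  refine ofReal_one_sub_le_of_measure_compl_le hδ0.le ((measure_mono fun ω hω => ?_).trans hcross)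
  obtain ⟨t, ht, hfail⟩ : ∃ t, 0 < F t ∧ ¬ (_ ≤ _) := by
    simpa only [Set.mem_compl_iff, Set.mem_ofPred_eq, not_forall, exists_prop] using hω
  rw [hFμ] at ht hfail
  rw [sub_le_deltaEps_iff ht hlam hnR, sum_boole, not_le] at hfail
  exact ⟨t, ht, hfail⟩
end

section
/- Fix ε > 0. For every non-empty closed interval P ⊆ (0, e^{−ε}) there exists a pair (p⋆, λ⋆) ∈ P × (0,∞) such that Δ_ε(p⋆, λ⋆) = inf_{λ ∈ (0,∞)} Δ_ε(p⋆, λ) = sup_{p ∈ P} Δ_ε(p, λ⋆) = ω(p⋆, ε). -/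
open Real

/-- Bernoulli Kullback–Leibler divergence `kl(a‖b)`. -/
noncomputable def klBer (a b : ℝ) : ℝ :=
  a * Real.log (a / b) + (1 - a) * Real.log ((1 - a) / (1 - b))

/-- `ω(p, ε)`. -/
noncomputable def omegaKL (p ε : ℝ) : ℝ :=
  if p = 0 then 0
  else if p ≤ Real.exp (-ε) then
    sInf {η : ℝ | η ∈ Set.Icc 0 (1 - p) ∧ klBer (p + η) p = ε}
  else 1 - p

/-!
Write `q = p + ω(p, ε)`, the root of `kl(q‖p) = ε` in `(p, 1)`. The variational formula
`kl(q‖p) = max_{λ > 0} (q log (1 + λ/p) - log (1 + λ))`, attained at `λ⋆ = (q - p)/(1 - q)`,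
says exactly that `inf_λ Δ_ε(p, λ) = Δ_ε(p, λ⋆) = q - p = ω(p, ε)`.

In the other variable, `Δ_ε(·, λ)` is concave on `(0, ∞)` because `r (r + λ) log (1 + λ/r)²`
increases with `r`. The root `q`, hence `λ⋆` and `∂_r Δ_ε(p, λ⋆(p))`, depend continuously on `p`,
so by the intermediate value theorem this derivative changes sign at some `p⋆ ∈ P` (or has the
right sign at an endpoint of `P`); by concavity `p⋆` then maximises `Δ_ε(·, λ⋆(p⋆))` on `P`.
-/

open Set Filter Topology

lemma mul_log_div_eq (x : ℝ) {c : ℝ} (hc : c ≠ 0) : x * log (x / c) = x * log x - x * log c := by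
  rcases eq_or_ne x 0 with rfl | hx
  · simp
  · rw [log_div hx hc, mul_sub]

section KL

variable {p q : ℝ}

lemma klBer_eq (q : ℝ) (hp₀ : p ≠ 0) (hp₁ : p ≠ 1) :
    klBer q p = q * log q - q * log p + ((1 - q) * log (1 - q) - (1 - q) * log (1 - p)) := by
  rw [klBer, mul_log_div_eq q hp₀, mul_log_div_eq (1 - q) (sub_ne_zero.2 hp₁.symm)]

@[simp] lemma klBer_self (p : ℝ) : klBer p p = 0 := by
  rcases eq_or_ne p 0 with rfl | hp₀
  · simp [klBer]
  rcases eq_or_ne p 1 with rfl | hp₁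
  · simp [klBer]
  simp [klBer_eq p hp₀ hp₁]

lemma klBer_one_left (p : ℝ) : klBer 1 p = -log p := by
  simp [klBer]

lemma continuous_klBer_left (hp₀ : p ≠ 0) (hp₁ : p ≠ 1) : Continuous fun q ↦ klBer q p := by
  simp only [klBer_eq _ hp₀ hp₁]
  have := continuous_mul_log.comp (continuous_sub_left (1 : ℝ))
  fun_prop

lemma continuousAt_klBer_right (hq₀ : q ≠ 0) (hq₁ : q ≠ 1) (hp₀ : p ≠ 0) (hp₁ : p ≠ 1) :
    ContinuousAt (klBer q) p := by
  have hq₁' : 1 - q ≠ 0 := sub_ne_zero.2 hq₁.symm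
  have hp₁' : 1 - p ≠ 0 := sub_ne_zero.2 hp₁.symm
  unfold klBer
  fun_prop (disch := simp [*])

lemma hasDerivAt_klBer_left (hp₀ : p ≠ 0) (hp₁ : p ≠ 1) (hq₀ : 0 < q) (hq₁ : q < 1) :
    HasDerivAt (fun q ↦ klBer q p) (log q - log p - (log (1 - q) - log (1 - p))) q := by
  simp only [klBer_eq _ hp₀ hp₁]
  have h₁ := hasDerivAt_mul_log hq₀.ne'
  have h₂ := (hasDerivAt_mul_log (sub_pos.2 hq₁).ne').comp q ((hasDerivAt_id q).const_sub 1)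
  have h₃ := ((hasDerivAt_id q).const_sub 1).mul_const (log (1 - p))
  exact ((h₁.sub ((hasDerivAt_id q).mul_const (log p))).add (h₂.sub h₃)).congr_deriv (by ring)

lemma strictMonoOn_klBer_left (hp₀ : 0 < p) (hp₁ : p < 1) :
    StrictMonoOn (fun q ↦ klBer q p) (Icc p 1) := by
  refine strictMonoOn_of_deriv_pos (convex_Icc p 1)
    (continuous_klBer_left hp₀.ne' hp₁.ne).continuousOn fun q hq ↦ ?_
  rw [interior_Icc] at hq
  rw [(hasDerivAt_klBer_left hp₀.ne' hp₁.ne (hp₀.trans hq.1) hq.2).deriv]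
  have := log_lt_log hp₀ hq.1
  have := log_lt_log (sub_pos.2 hq.2) (sub_lt_sub_left hq.1 1)
  linarith

end KL

section Omega

variable {ε p : ℝ}

lemma lt_one_of_lt_exp_neg (hε : 0 < ε) (hp : p < exp (-ε)) : p < 1 :=
  hp.trans (exp_lt_one_iff.2 (neg_lt_zero.2 hε))

lemma exists_klBer_eq (hε : 0 < ε) (hp : 0 < p) (hpε : p < exp (-ε)) :
    ∃ q ∈ Ioo p 1, klBer q p = ε := by
  have hp₁ := lt_one_of_lt_exp_neg hε hpε
  have hlog : log p < -ε := (log_lt_iff_lt_exp hp).2 hpε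
  obtain ⟨q, hq, hkl⟩ := intermediate_value_Ioo hp₁.le
    (continuous_klBer_left hp.ne' hp₁.ne).continuousOn
    (show ε ∈ Ioo (klBer p p) (klBer 1 p) by
      rw [klBer_self, klBer_one_left]; exact ⟨hε, by linarith⟩)
  exact ⟨q, hq, hkl⟩

lemma omegaKL_eq_sub (hε : 0 < ε) (hp : 0 < p) (hpε : p < exp (-ε)) {q : ℝ} (hq : q ∈ Icc p 1)
    (hkl : klBer q p = ε) : omegaKL p ε = q - p := by
  have hmono := strictMonoOn_klBer_left hp (lt_one_of_lt_exp_neg hε hpε)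
  have hroots : {η : ℝ | η ∈ Icc 0 (1 - p) ∧ klBer (p + η) p = ε} = {q - p} := by
    ext η
    simp only [mem_ofPred_eq, mem_singleton_iff, mem_Icc]
    constructor
    · rintro ⟨⟨hη₀, hη₁⟩, hη⟩
      have := hmono.injOn ⟨by linarith, by linarith⟩ hq (hη.trans hkl.symm)
      linarith
    · rintro rfl
      exact ⟨⟨by linarith [hq.1], by linarith [hq.2]⟩, by rwa [add_sub_cancel]⟩
  rw [omegaKL, if_neg hp.ne', if_pos hpε.le, hroots, csInf_singleton]

lemma omegaKL_spec (hε : 0 < ε) (hp : 0 < p) (hpε : p < exp (-ε)) :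
    p + omegaKL p ε ∈ Ioo p 1 ∧ klBer (p + omegaKL p ε) p = ε := by
  obtain ⟨q, hq, hkl⟩ := exists_klBer_eq hε hp hpε
  rw [omegaKL_eq_sub hε hp hpε (Ioo_subset_Icc_self hq) hkl, add_sub_cancel]
  exact ⟨hq, hkl⟩

lemma lt_add_omegaKL_of_klBer_lt (hε : 0 < ε) (hp : 0 < p) (hpε : p < exp (-ε)) {y : ℝ}
    (hy : y ∈ Icc p 1) (hkl : klBer y p < ε) : y < p + omegaKL p ε := by
  obtain ⟨hq, hqkl⟩ := omegaKL_spec hε hp hpε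
  exact ((strictMonoOn_klBer_left hp (lt_one_of_lt_exp_neg hε hpε)).lt_iff_lt hy
    (Ioo_subset_Icc_self hq)).1 (hkl.trans_eq hqkl.symm)

lemma add_omegaKL_lt_of_lt_klBer (hε : 0 < ε) (hp : 0 < p) (hpε : p < exp (-ε)) {y : ℝ}
    (hy : y ∈ Icc p 1) (hkl : ε < klBer y p) : p + omegaKL p ε < y := by
  obtain ⟨hq, hqkl⟩ := omegaKL_spec hε hp hpε
  exact ((strictMonoOn_klBer_left hp (lt_one_of_lt_exp_neg hε hpε)).lt_iff_lt
    (Ioo_subset_Icc_self hq) hy).1 (hqkl.trans_lt hkl)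

/-- The root of the increasing function `klBer · p` moves continuously with `p` because each
`klBer y ·` is continuous. -/
lemma continuousAt_omegaKL (hε : 0 < ε) (hp : 0 < p) (hpε : p < exp (-ε)) :
    ContinuousAt (fun x ↦ omegaKL x ε) p := by
  obtain ⟨⟨hpq, hq₁⟩, hkl⟩ := omegaKL_spec hε hp hpε
  set q := p + omegaKL p ε
  have hp₁ := lt_one_of_lt_exp_neg hε hpε
  have hmono := strictMonoOn_klBer_left hp hp₁
  have hnear : ∀ᶠ x in 𝓝 p, x ∈ Ioo 0 (exp (-ε)) := Ioo_mem_nhds hp hpε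
  suffices ContinuousAt (fun x ↦ x + omegaKL x ε) p by
    exact (this.sub (continuousAt_id' p)).congr (.of_forall fun x ↦ add_sub_cancel_left x _)
  refine tendsto_order.2 ⟨fun y hy ↦ ?_, fun y hy ↦ ?_⟩
  · set y' := max y ((p + q) / 2)
    have hy' : y' ∈ Ioo p q := ⟨lt_max_of_lt_right (by linarith), max_lt hy (by linarith)⟩
    have hlt : klBer y' p < ε :=
      hkl ▸ hmono ⟨hy'.1.le, by linarith [hy'.2]⟩ ⟨hpq.le, hq₁.le⟩ hy'.2
    have hcont := continuousAt_klBer_right (hp.trans hy'.1).ne' (hy'.2.trans hq₁).ne hp.ne' hp₁.ne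
    filter_upwards [hnear, eventually_lt_nhds hy'.1, hcont.eventually_lt_const hlt]
      with x hx hxy hxkl
    exact (le_max_left _ _).trans_lt
      (lt_add_omegaKL_of_klBer_lt hε hx.1 hx.2 ⟨hxy.le, by linarith [hy'.2]⟩ hxkl)
  · set y' := min y ((q + 1) / 2)
    have hy' : y' ∈ Ioo q 1 := ⟨lt_min hy (by linarith), min_lt_of_right_lt (by linarith)⟩
    have hlt : ε < klBer y' p :=
      hkl ▸ hmono ⟨hpq.le, hq₁.le⟩ ⟨by linarith [hy'.1], hy'.2.le⟩ hy'.1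
    have hcont := continuousAt_klBer_right (hp.trans (hpq.trans hy'.1)).ne' hy'.2.ne hp.ne' hp₁.ne
    filter_upwards [hnear, eventually_lt_nhds (hpq.trans hy'.1), hcont.eventually_const_lt hlt]
      with x hx hxy hxkl
    exact (add_omegaKL_lt_of_lt_klBer hε hx.1 hx.2 ⟨hxy.le, hy'.2.le⟩ hxkl).trans_le
      (min_le_left _ _)

end Omega

section Variational

variable {p q lam : ℝ}

lemma hasDerivAt_mul_log_one_add_div_sub_log (hp : 0 < p) (hlam : 0 < lam) :
    HasDerivAt (fun l ↦ q * log (1 + l / p) - log (1 + l)) (q / (p + lam) - 1 / (1 + lam)) lam := by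
  have h₁ := (((hasDerivAt_id lam).div_const p).const_add 1).log (by positivity)
  have h₂ := ((hasDerivAt_id lam).const_add 1).log (by positivity)
  refine ((h₁.const_mul q).sub h₂).congr_deriv ?_
  simp only [id]
  field_simp

lemma mul_log_one_add_div_sub_log_eq_klBer (hp : 0 < p) (hpq : p < q) (hq : q < 1) :
    q * log (1 + (q - p) / (1 - q) / p) - log (1 + (q - p) / (1 - q)) = klBer q p := by
  have hq' : 0 < 1 - q := sub_pos.2 hq
  have hp' : 0 < 1 - p := by linarith
  have hq₀ : 0 < q := hp.trans hpq
  have e₁ : 1 + (q - p) / (1 - q) / p = q / p / ((1 - q) / (1 - p)) := by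
    field_simp; ring
  have e₂ : 1 + (q - p) / (1 - q) = ((1 - q) / (1 - p))⁻¹ := by
    field_simp; ring
  rw [e₁, e₂, log_div (by positivity) (by positivity), log_inv, klBer]
  ring

lemma mul_log_one_add_div_sub_log_le_klBer (hp : 0 < p) (hpq : p < q) (hq : q < 1)
    (hlam : 0 < lam) : q * log (1 + lam / p) - log (1 + lam) ≤ klBer q p := by
  have hq' : 0 < 1 - q := sub_pos.2 hq
  have hopt : 0 < (q - p) / (1 - q) := div_pos (sub_pos.2 hpq) hq'
  have hderiv : ∀ x ∈ Ioi (0 : ℝ),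
      HasDerivAt (fun l ↦ q * log (1 + l / p) - log (1 + l)) (q / (p + x) - 1 / (1 + x)) x :=
    fun x hx ↦ hasDerivAt_mul_log_one_add_div_sub_log hp hx
  have hmax : IsMaxOn (fun l ↦ q * log (1 + l / p) - log (1 + l)) (Ioi 0) ((q - p) / (1 - q)) := by
    refine isMaxOn_Ioi_of_deriv (hderiv _ hopt).continuousAt
      (fun x hx ↦ (hderiv x hx.1).differentiableAt.differentiableWithinAt)
      (fun x hx ↦ (hderiv x (hopt.trans hx)).differentiableAt.differentiableWithinAt)
      (fun x hx ↦ ?_) (fun x hx ↦ ?_)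
    · have hx₀ : 0 < x := hx.1
      have := (lt_div_iff₀ hq').1 hx.2
      rw [(hderiv x hx₀).deriv, sub_nonneg, div_le_div_iff₀ (by positivity) (by positivity)]
      nlinarith
    · have hx₀ : 0 < x := hopt.trans hx
      have := (div_lt_iff₀ hq').1 (mem_Ioi.1 hx)
      rw [(hderiv x hx₀).deriv, sub_nonpos, div_le_div_iff₀ (by positivity) (by positivity)]
      nlinarith
  rw [← mul_log_one_add_div_sub_log_eq_klBer hp hpq hq]
  exact hmax hlam

end Variational

section InfOverLambda

variable {ε p q lam : ℝ}

lemma log_one_add_div_pos (hp : 0 < p) (hlam : 0 < lam) : 0 < log (1 + lam / p) :=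
  log_pos (lt_add_of_pos_right 1 (div_pos hlam hp))

lemma sub_le_DeltaEps (hp : 0 < p) (hpq : p < q) (hq : q < 1) (hkl : klBer q p = ε)
    (hlam : 0 < lam) : q - p ≤ DeltaEps ε p lam := by
  rw [DeltaEps, sub_le_sub_iff_right, le_div_iff₀ (log_one_add_div_pos hp hlam)]
  linarith [mul_log_one_add_div_sub_log_le_klBer hp hpq hq hlam]

lemma DeltaEps_div_one_sub (hp : 0 < p) (hpq : p < q) (hq : q < 1) (hkl : klBer q p = ε) :
    DeltaEps ε p ((q - p) / (1 - q)) = q - p := by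
  have hopt : 0 < (q - p) / (1 - q) := div_pos (sub_pos.2 hpq) (sub_pos.2 hq)
  rw [DeltaEps, sub_left_inj, div_eq_iff (log_one_add_div_pos hp hopt).ne']
  linarith [mul_log_one_add_div_sub_log_eq_klBer hp hpq hq]

/-- The minimiser of `DeltaEps ε p` over `λ > 0`. -/
noncomputable def lambdaStar (ε p : ℝ) : ℝ := omegaKL p ε / (1 - p - omegaKL p ε)

lemma lambdaStar_eq (ε p : ℝ) :
    lambdaStar ε p = (p + omegaKL p ε - p) / (1 - (p + omegaKL p ε)) := by
  rw [lambdaStar, add_sub_cancel_left, sub_add_eq_sub_sub]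

lemma lambdaStar_pos (hε : 0 < ε) (hp : 0 < p) (hpε : p < exp (-ε)) : 0 < lambdaStar ε p := by
  obtain ⟨⟨hpq, hq⟩, -⟩ := omegaKL_spec hε hp hpε
  rw [lambdaStar_eq]
  exact div_pos (sub_pos.2 hpq) (sub_pos.2 hq)

lemma omegaKL_le_DeltaEps (hε : 0 < ε) (hp : 0 < p) (hpε : p < exp (-ε)) (hlam : 0 < lam) :
    omegaKL p ε ≤ DeltaEps ε p lam := by
  obtain ⟨⟨hpq, hq⟩, hkl⟩ := omegaKL_spec hε hp hpε
  simpa using sub_le_DeltaEps hp hpq hq hkl hlam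

lemma DeltaEps_lambdaStar (hε : 0 < ε) (hp : 0 < p) (hpε : p < exp (-ε)) :
    DeltaEps ε p (lambdaStar ε p) = omegaKL p ε := by
  obtain ⟨⟨hpq, hq⟩, hkl⟩ := omegaKL_spec hε hp hpε
  simpa [lambdaStar_eq] using DeltaEps_div_one_sub hp hpq hq hkl

end InfOverLambda

section DerivInR

variable {ε r lam : ℝ}

lemma hasDerivAt_log_one_add_div (hr : 0 < r) (hlam : 0 < lam) :
    HasDerivAt (fun x ↦ log (1 + lam / x)) (-(lam / (r * (r + lam)))) r := by
  have h := (((hasDerivAt_const r lam).fun_div (hasDerivAt_id' r) hr.ne').const_add 1).log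
    (by positivity)
  refine h.congr_deriv ?_
  field_simp
  ring

/-- `∂/∂r` of `DeltaEps ε r λ`. -/
noncomputable def DeltaEpsDeriv (ε r lam : ℝ) : ℝ :=
  (log (1 + lam) + ε) * lam / (r * (r + lam) * log (1 + lam / r) ^ 2) - 1

lemma hasDerivAt_DeltaEps (hr : 0 < r) (hlam : 0 < lam) :
    HasDerivAt (fun x ↦ DeltaEps ε x lam) (DeltaEpsDeriv ε r lam) r := by
  have hu := log_one_add_div_pos hr hlam
  refine (((hasDerivAt_const r (log (1 + lam) + ε)).div (hasDerivAt_log_one_add_div hr hlam)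
    hu.ne').sub (hasDerivAt_id r)).congr_deriv ?_
  rw [DeltaEpsDeriv]
  field_simp
  ring

lemma hasDerivAt_mul_mul_log_one_add_div_sq (hr : 0 < r) (hlam : 0 < lam) :
    HasDerivAt (fun x ↦ x * (x + lam) * log (1 + lam / x) ^ 2)
      (log (1 + lam / r) * ((2 * r + lam) * log (1 + lam / r) - 2 * lam)) r := by
  have h := ((hasDerivAt_id' r).fun_mul ((hasDerivAt_id' r).add_const lam)).fun_mul
    ((hasDerivAt_log_one_add_div hr hlam).fun_pow 2)
  refine h.congr_deriv ?_
  field_simp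
  ring

/-- Uses `2x / (x + 2) ≤ log (1 + x)` with `x = λ / r`. -/
lemma monotoneOn_mul_mul_log_one_add_div_sq (hlam : 0 < lam) :
    MonotoneOn (fun x ↦ x * (x + lam) * log (1 + lam / x) ^ 2) (Ioi 0) := by
  have hderiv := fun x (hx : x ∈ Ioi (0 : ℝ)) ↦ hasDerivAt_mul_mul_log_one_add_div_sq hx hlam
  refine monotoneOn_of_deriv_nonneg (convex_Ioi 0)
    (fun x hx ↦ (hderiv x hx).continuousAt.continuousWithinAt)
    (fun x hx ↦ (hderiv x (interior_subset hx)).differentiableAt.differentiableWithinAt)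
    (fun x hx ↦ ?_)
  rw [interior_Ioi] at hx
  have hx₀ : 0 < x := hx
  rw [(hderiv x hx).deriv]
  have hlog := le_log_one_add_of_nonneg (div_pos hlam hx₀).le
  have hbound : (2 * x + lam) * (2 * (lam / x) / (lam / x + 2)) = 2 * lam := by
    field_simp; ring
  have := mul_le_mul_of_nonneg_left hlog (by positivity : (0 : ℝ) ≤ 2 * x + lam)
  exact mul_nonneg (log_one_add_div_pos hx₀ hlam).le (by linarith)

lemma antitoneOn_DeltaEpsDeriv (hε : 0 ≤ ε) (hlam : 0 < lam) :
    AntitoneOn (fun x ↦ DeltaEpsDeriv ε x lam) (Ioi 0) := by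
  intro x hx y hy hxy
  have hx₀ : 0 < x := hx
  have hnum : 0 ≤ (log (1 + lam) + ε) * lam := by
    have := log_nonneg (le_add_of_nonneg_right hlam.le); positivity
  have hden : 0 < x * (x + lam) * log (1 + lam / x) ^ 2 := by
    have := log_one_add_div_pos hx₀ hlam; positivity
  simp only [DeltaEpsDeriv, sub_le_sub_iff_right]
  exact div_le_div_of_nonneg_left hnum hden (monotoneOn_mul_mul_log_one_add_div_sq hlam hx hy hxy)

/-- Since `DeltaEps ε · λ` is concave on `(0, ∞)`, a point where its derivative changes sign
maximises it. -/
lemma isMaxOn_DeltaEps_Icc {a b c : ℝ} (hε : 0 ≤ ε) (ha : 0 < a) (hlam : 0 < lam)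
    (hc : c ∈ Icc a b) (hleft : a < c → 0 ≤ DeltaEpsDeriv ε c lam)
    (hright : c < b → DeltaEpsDeriv ε c lam ≤ 0) :
    IsMaxOn (fun x ↦ DeltaEps ε x lam) (Icc a b) c := by
  have hpos : ∀ x, a ≤ x → x ∈ Ioi (0 : ℝ) := fun x hx ↦ ha.trans_le hx
  have hderiv : ∀ x, a ≤ x → HasDerivAt (fun x ↦ DeltaEps ε x lam) (DeltaEpsDeriv ε x lam) x :=
    fun x hx ↦ hasDerivAt_DeltaEps (hpos x hx) hlam
  have hanti := antitoneOn_DeltaEpsDeriv hε hlam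
  refine isMaxOn_Icc_of_deriv (hderiv a le_rfl).continuousAt (hderiv c hc.1).continuousAt
    (hderiv b (hc.1.trans hc.2)).continuousAt
    (fun x hx ↦ (hderiv x hx.1.le).differentiableAt.differentiableWithinAt)
    (fun x hx ↦ (hderiv x (hc.1.trans hx.1.le)).differentiableAt.differentiableWithinAt)
    (fun x hx ↦ ?_) (fun x hx ↦ ?_)
  · rw [(hderiv x hx.1.le).deriv]
    exact (hleft (hx.1.trans hx.2)).trans (hanti (hpos x hx.1.le) (hpos c hc.1) hx.2.le)
  · rw [(hderiv x (hc.1.trans hx.1.le)).deriv]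
    exact (hanti (hpos c hc.1) (hpos x (hc.1.trans hx.1.le)) hx.1.le).trans
      (hright (hx.1.trans hx.2))

end DerivInR

lemma exists_mem_Icc_sign_change {f : ℝ → ℝ} {a b : ℝ} (hab : a ≤ b)
    (hf : ContinuousOn f (Icc a b)) : ∃ c ∈ Icc a b, (a < c → 0 ≤ f c) ∧ (c < b → f c ≤ 0) := by
  by_cases ha : f a ≤ 0
  · exact ⟨a, left_mem_Icc.2 hab, fun h ↦ (lt_irrefl a h).elim, fun _ ↦ ha⟩
  by_cases hb : 0 ≤ f b
  · exact ⟨b, right_mem_Icc.2 hab, fun _ ↦ hb, fun h ↦ (lt_irrefl b h).elim⟩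
  rw [not_le] at ha hb
  obtain ⟨c, hc, hfc⟩ := intermediate_value_Icc' hab hf ⟨hb.le, ha.le⟩
  exact ⟨c, hc, fun _ ↦ hfc.ge, fun _ ↦ hfc.le⟩

lemma continuousAt_DeltaEpsDeriv_lambdaStar {ε p : ℝ} (hε : 0 < ε) (hp : 0 < p)
    (hpε : p < exp (-ε)) : ContinuousAt (fun x ↦ DeltaEpsDeriv ε x (lambdaStar ε x)) p := by
  obtain ⟨⟨-, hq⟩, -⟩ := omegaKL_spec hε hp hpε
  have hω := continuousAt_omegaKL hε hp hpε
  have hlam : ContinuousAt (lambdaStar ε) p :=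
    hω.div ((continuousAt_const.sub continuousAt_id).sub hω) (by linarith : 0 < 1 - p - _).ne'
  have hlam₀ := lambdaStar_pos hε hp hpε
  have hu := log_one_add_div_pos hp hlam₀
  have h₁ : 1 + lambdaStar ε p ≠ 0 := by positivity
  have h₂ : 1 + lambdaStar ε p / p ≠ 0 := by positivity
  have h₃ : p * (p + lambdaStar ε p) * log (1 + lambdaStar ε p / p) ^ 2 ≠ 0 := by positivity
  have h₀ : p ≠ 0 := hp.ne'
  unfold DeltaEpsDeriv
  fun_prop (disch := first | assumption | (dsimp only; assumption))

/-- **Lemma 3** (saddle point): for every non-empty closed interval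
`P = [a,b] ⊆ (0, e^{-ε})` there exists `(p⋆, λ⋆) ∈ P × (0,∞)` with
`Δ_ε(p⋆,λ⋆) = inf_{λ>0} Δ_ε(p⋆,λ) = sup_{p∈P} Δ_ε(p,λ⋆) = ω(p⋆,ε)`. -/
theorem saddle_point_lemma (ε : ℝ) (hε : 0 < ε) (a b : ℝ)
    (ha : 0 < a) (hab : a ≤ b) (hb : b < Real.exp (-ε)) :
    ∃ pstar lamstar : ℝ, pstar ∈ Set.Icc a b ∧ 0 < lamstar ∧
      DeltaEps ε pstar lamstar = (⨅ lam : Set.Ioi (0 : ℝ), DeltaEps ε pstar lam) ∧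
      DeltaEps ε pstar lamstar = (⨆ p : Set.Icc a b, DeltaEps ε p lamstar) ∧
      DeltaEps ε pstar lamstar = omegaKL pstar ε := by
  have hP : ∀ p ∈ Icc a b, 0 < p ∧ p < exp (-ε) := fun p hp ↦ ⟨ha.trans_le hp.1, hp.2.trans_lt hb⟩
  obtain ⟨ps, hps, hleft, hright⟩ := exists_mem_Icc_sign_change hab fun p hp ↦
    (continuousAt_DeltaEpsDeriv_lambdaStar hε (hP p hp).1 (hP p hp).2).continuousWithinAt
  obtain ⟨hps₀, hpsε⟩ := hP ps hps
  have hlam := lambdaStar_pos hε hps₀ hpsε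
  have hval := DeltaEps_lambdaStar hε hps₀ hpsε
  have hmin : IsMinOn (DeltaEps ε ps) (Ioi 0) (lambdaStar ε ps) := fun l hl ↦
    hval ▸ omegaKL_le_DeltaEps hε hps₀ hpsε hl
  have hmax := isMaxOn_DeltaEps_Icc hε.le ha hlam hps hleft hright
  exact ⟨ps, lambdaStar ε ps, hps, hlam, (hmin.iInf_eq hlam).symm, (hmax.iSup_eq hps).symm, hval⟩
end

section
/- Let X ⊆ ℝ^d be a Borel set, let Y ⊆ [−∞,∞] be a non-empty interval bounded from below, and let Γ : X × Y → [−∞,∞]. Suppose that for each x ∈ X the function y ↦ Γ(x,y) is sign-monotonic, and that for each y ∈ Y the function x ↦ Γ(x,y) is continuous. Define γ : X → cl(Y) by γ(x) := sup Y if Γ(x,y) < 0 for all y ∈ Y, and γ(x) := inf{ y ∈ Y : Γ(x,y) ≥ 0 } otherwise. Then γ is continuous, and Γ(x,y)·(y − γ(x)) > 0 for all x ∈ X and all y ∈ Y \ {γ(x)}. -/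
open Real

lemma ereal_neg_pos {a : EReal} (ha : a < 0) : 0 < -a := by
  rw [← neg_zero]; exact EReal.neg_lt_neg_iff.2 ha

lemma ereal_sub_neg_of_lt {a b : EReal} (h : a < b) : a - b < 0 := by
  rw [EReal.sub_lt_iff (.inl (ne_bot_of_gt h)) (.inr h.ne_top)]
  simpa using h

lemma ereal_sub_pos_of_lt {a b : EReal} (h : b < a) : 0 < a - b := by
  rw [EReal.lt_sub_iff_add_lt (.inr EReal.zero_ne_top) (.inr EReal.zero_ne_bot)]
  simpa using h

lemma ereal_mul_pos_of_neg {a b : EReal} (ha : a < 0) (hb : b < 0) : 0 < a * b := by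
  have := EReal.mul_pos (a := -a) (b := -b) (ereal_neg_pos ha) (ereal_neg_pos hb)
  rwa [EReal.neg_mul, mul_neg, neg_neg] at this

/-- **Lemma 4** (topological implicit function theorem): let `X ⊆ ℝ^d` be Borel,
`Y ⊆ [-∞,∞]` a non-empty interval bounded from below, and `Γ : X × Y → [-∞,∞]`.
Suppose `y ↦ Γ(x,y)` is sign-monotonic for each `x ∈ X` (i.e. for `y_a < y_b` in `Y`,
either `Γ(x,y_a) < 0` or `Γ(x,y_b) > 0`) and `x ↦ Γ(x,y)` is continuous on `X` for
each `y ∈ Y`. Define `γ(x) := sup Y` if `Γ(x,·) < 0` on `Y`, and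
`γ(x) := inf{y ∈ Y : Γ(x,y) ≥ 0}` otherwise. Then `γ` is continuous on `X` and
`Γ(x,y)(y - γ(x)) > 0` for all `x ∈ X`, `y ∈ Y \ {γ(x)}`. -/
theorem topological_implicit_function_theorem
    (d : ℕ) (X : Set (EuclideanSpace ℝ (Fin d))) (hX : MeasurableSet X)
    (Y : Set EReal) (hYne : Y.Nonempty) (hYint : Y.OrdConnected) (hYbdd : BddBelow Y)
    (Γ : EuclideanSpace ℝ (Fin d) → EReal → EReal)
    (hsign : ∀ x ∈ X, ∀ ya ∈ Y, ∀ yb ∈ Y, ya < yb → (Γ x ya < 0 ∨ 0 < Γ x yb))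
    (hcont : ∀ y ∈ Y, ContinuousOn (fun x => Γ x y) X)
    (γ : EuclideanSpace ℝ (Fin d) → EReal)
    (hγsup : ∀ x ∈ X, (∀ y ∈ Y, Γ x y < 0) → γ x = sSup Y)
    (hγinf : ∀ x ∈ X, (∃ y ∈ Y, 0 ≤ Γ x y) →
        γ x = sInf {y | y ∈ Y ∧ 0 ≤ Γ x y}) :
    ContinuousOn γ X ∧
      ∀ x ∈ X, ∀ y ∈ Y, y ≠ γ x → 0 < Γ x y * (y - γ x) := by
  -- below γ, Γ is negative
  have L1 : ∀ x ∈ X, ∀ y ∈ Y, y < γ x → Γ x y < 0 := by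
    intro x hx y hy hlt
    by_cases hE : ∃ y' ∈ Y, 0 ≤ Γ x y'
    · rw [hγinf x hx hE] at hlt
      by_contra hcontra
      exact absurd (sInf_le (by exact ⟨hy, not_lt.1 hcontra⟩)) (not_le.2 hlt)
    · push_neg at hE
      exact hE y hy
  -- above γ, Γ is positive
  have L2 : ∀ x ∈ X, ∀ y ∈ Y, γ x < y → 0 < Γ x y := by
    intro x hx y hy hlt
    by_cases hE : ∃ y' ∈ Y, 0 ≤ Γ x y'
    · rw [hγinf x hx hE] at hlt
      obtain ⟨y', ⟨hy'Y, hy'pos⟩, hy'lt⟩ := sInf_lt_iff.1 hlt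
      rcases hsign x hx y' hy'Y y hy hy'lt with h | h
      · exact absurd hy'pos h.not_ge
      · exact h
    · push_neg at hE
      rw [hγsup x hx hE] at hlt
      exact absurd (le_sSup hy) (not_le.2 hlt)
  -- bounds on γ
  have Llb : ∀ x ∈ X, sInf Y ≤ γ x := by
    intro x hx
    by_cases hE : ∃ y' ∈ Y, 0 ≤ Γ x y'
    · rw [hγinf x hx hE]
      exact sInf_le_sInf fun y hy => hy.1
    · push_neg at hE
      rw [hγsup x hx hE]
      exact le_trans (sInf_le hYne.some_mem) (le_sSup hYne.some_mem)
  have Lub : ∀ x ∈ X, γ x ≤ sSup Y := by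
    intro x hx
    by_cases hE : ∃ y' ∈ Y, 0 ≤ Γ x y'
    · obtain ⟨y', hy', hpos⟩ := hE
      rw [hγinf x hx ⟨y', hy', hpos⟩]
      exact le_trans (sInf_le ⟨hy', hpos⟩) (le_sSup hy')
    · push_neg at hE
      exact (hγsup x hx hE).le
  -- interval membership criterion
  have Lmem : ∀ z : EReal, sInf Y < z → z < sSup Y → z ∈ Y := by
    intro z h1 h2
    obtain ⟨y₀, hy₀, hy₀z⟩ := sInf_lt_iff.1 h1
    obtain ⟨y₁, hy₁, hzy₁⟩ := lt_sSup_iff.1 h2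
    exact hYint.out hy₀ hy₁ ⟨hy₀z.le, hzy₁.le⟩
  constructor
  · intro x₀ hx₀
    rw [ContinuousWithinAt, tendsto_order]
    constructor
    · intro a ha
      by_cases hA : a < sInf Y
      · filter_upwards [self_mem_nhdsWithin] with x hx
        exact hA.trans_le (Llb x hx)
      · push_neg at hA
        obtain ⟨z, hz1, hz2⟩ := exists_between ha
        have hzY : z ∈ Y := Lmem z (hA.trans_lt hz1) (hz2.trans_le (Lub x₀ hx₀))
        have hneg : Γ x₀ z < 0 := L1 x₀ hx₀ z hzY hz2
        have hev : ∀ᶠ x in nhdsWithin x₀ X, Γ x z < 0 :=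
          ((hcont z hzY x₀ hx₀)).eventually_lt_const hneg
        filter_upwards [hev, self_mem_nhdsWithin] with x hΓ hx
        have : z ≤ γ x := le_of_not_gt fun h => (L2 x hx z hzY h).not_gt hΓ
        exact hz1.trans_le this
    · intro b hb
      by_cases hB : sSup Y < b
      · filter_upwards [self_mem_nhdsWithin] with x hx
        exact (Lub x hx).trans_lt hB
      · push_neg at hB
        obtain ⟨z, hz1, hz2⟩ := exists_between hb
        have hzY : z ∈ Y := Lmem z ((Llb x₀ hx₀).trans_lt hz1) (hz2.trans_le hB)
        have hpos : 0 < Γ x₀ z := L2 x₀ hx₀ z hzY hz1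
        have hev : ∀ᶠ x in nhdsWithin x₀ X, 0 < Γ x z :=
          ((hcont z hzY x₀ hx₀)).eventually_const_lt hpos
        filter_upwards [hev, self_mem_nhdsWithin] with x hΓ hx
        have : γ x ≤ z := le_of_not_gt fun h => (L1 x hx z hzY h).not_gt hΓ
        exact this.trans_lt hz2
  · intro x hx y hy hne
    rcases hne.lt_or_gt with h | h
    · exact ereal_mul_pos_of_neg (L1 x hx y hy h) (ereal_sub_neg_of_lt h)
    · exact EReal.mul_pos (L2 x hx y hy h) (ereal_sub_pos_of_lt h)
end

section
/- Fix ε > 0 and p ∈ (0, e^{−ε}). Then the function λ ↦ Γ₁(p,λ) := (p+λ)·log(1+λ/p) − (1+λ)·(ε + log(1+λ)) has a unique zero λ̲(p) ∈ (0,∞), and moreover Γ₁(p,λ) < 0 for all λ ∈ (0, λ̲(p)) and Γ₁(p,λ) > 0 for all λ ∈ (λ̲(p), ∞). -/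
open Real

/-- `Γ₁(p,λ) = (p+λ) log(1+λ/p) - (1+λ)(ε + log(1+λ))`. -/
noncomputable def Gamma1 (ε p lam : ℝ) : ℝ :=
  (p + lam) * Real.log (1 + lam / p) - (1 + lam) * (ε + Real.log (1 + lam))

/-- derivative of Gamma1 -/
lemma gamma1_hasDerivAt (ε p : ℝ) (hp : 0 < p) {x : ℝ} (hx : 0 ≤ x) :
    HasDerivAt (Gamma1 ε p) (Real.log (1 + x / p) - Real.log (1 + x) - ε) x := by
  have hxp : 0 ≤ x / p := div_nonneg hx hp.le
  have h1 : (0:ℝ) < 1 + x / p := by linarith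
  have h2 : (0:ℝ) < 1 + x := by linarith
  have hinner : HasDerivAt (fun y : ℝ => 1 + y / p) (1 / p) x := by
    simpa using ((hasDerivAt_id x).div_const p).const_add 1
  have hlog : HasDerivAt (fun y : ℝ => Real.log (1 + y / p)) ((1/p) / (1 + x/p)) x :=
    hinner.log (ne_of_gt h1)
  have hA : HasDerivAt (fun y : ℝ => (p + y) * Real.log (1 + y / p))
      (1 * Real.log (1 + x/p) + (p + x) * ((1/p)/(1+x/p))) x :=
    (((hasDerivAt_id x).const_add p).mul hlog)
  have hlog2 : HasDerivAt (fun y : ℝ => Real.log (1 + y)) (1/(1+x)) x := by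
    have := (((hasDerivAt_id x).const_add 1).log (ne_of_gt h2))
    simpa using this
  have hB : HasDerivAt (fun y : ℝ => (1 + y) * (ε + Real.log (1 + y)))
      (1 * (ε + Real.log (1+x)) + (1 + x) * (1/(1+x))) x :=
    (((hasDerivAt_id x).const_add 1).mul (hlog2.const_add ε))
  have hD := hA.sub hB
  have e1 : (p + x) * ((1/p)/(1+x/p)) = 1 := by
    have hpx : p + x ≠ 0 := by positivity
    field_simp
  have e2 : (1 + x) * (1/(1+x)) = 1 := by field_simp
  have : (1 * Real.log (1 + x/p) + (p + x) * ((1/p)/(1+x/p))) -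
      (1 * (ε + Real.log (1+x)) + (1 + x) * (1/(1+x)))
      = Real.log (1 + x / p) - Real.log (1 + x) - ε := by
    rw [e1, e2]; ring
  rw [this] at hD
  exact hD

lemma phi_mono (ε p : ℝ) (hp : 0 < p) (hp1 : p < 1) :
    MonotoneOn (fun x => Real.log (1 + x / p) - Real.log (1 + x) - ε) (Set.Ici (0:ℝ)) := by
  intro a ha b hb hab
  simp only [Set.mem_Ici] at ha hb
  have h1a : (0:ℝ) < 1 + a / p := by have := div_nonneg ha hp.le; linarith
  have h1b : (0:ℝ) < 1 + b / p := by have := div_nonneg hb hp.le; linarith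
  have h2a : (0:ℝ) < 1 + a := by linarith
  have h2b : (0:ℝ) < 1 + b := by linarith
  have key : (1 + a/p) * (1 + b) ≤ (1 + b/p) * (1 + a) := by
    have e1 : 1 + a/p = (p+a)/p := by field_simp
    have e2 : 1 + b/p = (p+b)/p := by field_simp
    rw [e1, e2, div_mul_eq_mul_div, div_mul_eq_mul_div, div_le_div_iff₀ hp hp]
    nlinarith [mul_nonneg (mul_nonneg hp.le (sub_nonneg.2 hab)) (sub_nonneg.2 hp1.le)]
  have hlog : Real.log ((1 + a/p) * (1 + b)) ≤ Real.log ((1 + b/p) * (1 + a)) :=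
    Real.log_le_log (by positivity) key
  rw [Real.log_mul (ne_of_gt h1a) (ne_of_gt h2b), Real.log_mul (ne_of_gt h1b) (ne_of_gt h2a)] at hlog
  simp only
  linarith

/-- For `ε > 0` and `p ∈ (0, e^{-ε})`, the map `λ ↦ Γ₁(p,λ)` has a unique zero
`λ̲(p) ∈ (0,∞)`; moreover `Γ₁(p,λ) < 0` on `(0, λ̲(p))` and `Γ₁(p,λ) > 0`
on `(λ̲(p), ∞)`. -/
theorem Gamma1_unique_zero (ε : ℝ) (hε : 0 < ε)
    (p : ℝ) (hp : p ∈ Set.Ioo (0 : ℝ) (Real.exp (-ε))) :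
    ∃ lam0 : ℝ, 0 < lam0 ∧ Gamma1 ε p lam0 = 0 ∧
      (∀ lam : ℝ, 0 < lam → Gamma1 ε p lam = 0 → lam = lam0) ∧
      (∀ lam : ℝ, 0 < lam → lam < lam0 → Gamma1 ε p lam < 0) ∧
      (∀ lam : ℝ, lam0 < lam → 0 < Gamma1 ε p lam) := by
  obtain ⟨hp0, hpe⟩ := hp
  have hexp1 : Real.exp (-ε) < 1 := by
    rw [Real.exp_lt_one_iff]; linarith
  have hp1 : p < 1 := hpe.trans hexp1
  set φ : ℝ → ℝ := fun x => Real.log (1 + x / p) - Real.log (1 + x) - ε with hφdef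
  have hf0 : Gamma1 ε p 0 = -ε := by simp [Gamma1]
  have hcont : ContinuousOn (Gamma1 ε p) (Set.Ici 0) :=
    fun x hx => ((gamma1_hasDerivAt ε p hp0 hx).continuousAt).continuousWithinAt
  have hφmono : ∀ a b : ℝ, 0 ≤ a → a ≤ b → φ a ≤ φ b := by
    intro a b ha hab
    exact phi_mono ε p hp0 hp1 (Set.mem_Ici.2 ha) (Set.mem_Ici.2 (ha.trans hab)) hab
  -- strict monotonicity of Gamma1 past a point where φ is positive
  have hmonoOn : ∀ ξ : ℝ, 0 ≤ ξ → 0 < φ ξ → StrictMonoOn (Gamma1 ε p) (Set.Ici ξ) := by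
    intro ξ hξ0 hφξ
    apply strictMonoOn_of_deriv_pos (convex_Ici ξ) (hcont.mono (Set.Ici_subset_Ici.2 hξ0))
    intro x hx
    rw [interior_Ici] at hx
    have hx0 : 0 ≤ x := hξ0.trans hx.le
    rw [(gamma1_hasDerivAt ε p hp0 hx0).deriv]
    have := hφmono ξ x hξ0 hx.le
    simp only [hφdef] at this hφξ
    linarith
  -- positivity past any zero
  have key : ∀ a : ℝ, 0 < a → Gamma1 ε p a = 0 → ∀ lam, a < lam → 0 < Gamma1 ε p lam := by
    intro a ha hfa lam hlam
    obtain ⟨ξ, hξmem, hslope⟩ := exists_hasDerivAt_eq_slope (Gamma1 ε p) φ ha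
      (hcont.mono (Set.Icc_subset_Ici_self))
      (fun x hx => gamma1_hasDerivAt ε p hp0 hx.1.le)
    have hφξ : 0 < φ ξ := by
      rw [hslope, hfa, hf0]
      rw [show (0:ℝ) - -ε = ε by ring, sub_zero]
      exact div_pos hε ha
    have hcmp := (hmonoOn ξ hξmem.1.le hφξ) (Set.mem_Ici.2 hξmem.2.le)
      (Set.mem_Ici.2 (hξmem.2.le.trans hlam.le)) hlam
    rw [hfa] at hcmp
    exact hcmp
  -- find B with Gamma1 ε p B > 0
  set q : ℝ := p * Real.exp ε with hqdef
  have hq0 : 0 < q := by positivity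
  have hq1 : q < 1 := by
    have h := mul_lt_mul_of_pos_right hpe (Real.exp_pos ε)
    rwa [Real.exp_neg, inv_mul_cancel₀ (Real.exp_pos ε).ne'] at h
  set Λ : ℝ := max 1 ((q - p)/(1 - q) + 1) with hΛdef
  have hΛ1 : (1:ℝ) ≤ Λ := le_max_left _ _
  have hΛ0 : (0:ℝ) ≤ Λ := by linarith
  have hφpos : ∀ x : ℝ, Λ ≤ x → 0 < φ x := by
    intro x hx
    have hx0 : (0:ℝ) ≤ x := hΛ0.trans hx
    have h1 : (q - p)/(1 - q) < x := by
      have := le_max_right 1 ((q - p)/(1 - q) + 1)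
      linarith
    rw [div_lt_iff₀ (by linarith : (0:ℝ) < 1 - q)] at h1
    have hgt : q * (1 + x) < p + x := by nlinarith
    have e3 : 1 + x/p = (p+x)/p := by field_simp
    have elog : Real.log (1 + x/p) = Real.log (p+x) - Real.log p := by
      rw [e3, Real.log_div (by positivity) hp0.ne']
    have elq : Real.log q = Real.log p + ε := by
      rw [hqdef, Real.log_mul hp0.ne' (Real.exp_pos ε).ne', Real.log_exp]
    have hlt : Real.log (q * (1+x)) < Real.log (p + x) :=
      Real.log_lt_log (by positivity) hgt
    rw [Real.log_mul hq0.ne' (by positivity : (1+x:ℝ) ≠ 0)] at hlt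
    simp only [hφdef]
    linarith
  set δ : ℝ := φ Λ with hδdef
  have hδ : 0 < δ := hφpos Λ le_rfl
  have hgmono : MonotoneOn (fun x => Gamma1 ε p x - δ * x) (Set.Ici Λ) := by
    apply monotoneOn_of_deriv_nonneg (convex_Ici Λ)
    · exact ((hcont.mono (Set.Ici_subset_Ici.2 hΛ0)).sub
        ((continuous_const.mul continuous_id).continuousOn))
    · intro x hx
      rw [interior_Ici] at hx
      have hx0 : 0 ≤ x := hΛ0.trans hx.le
      exact ((gamma1_hasDerivAt ε p hp0 hx0).sub
        (((hasDerivAt_id x).const_mul δ))).differentiableAt.differentiableWithinAt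
    · intro x hx
      rw [interior_Ici] at hx
      have hx0 : 0 ≤ x := hΛ0.trans hx.le
      have hd : HasDerivAt (fun x => Gamma1 ε p x - δ * x) (φ x - δ * 1) x :=
        (gamma1_hasDerivAt ε p hp0 hx0).sub ((hasDerivAt_id x).const_mul δ)
      rw [hd.deriv]
      have := hφmono Λ x hΛ0 hx.le
      rw [← hδdef] at this
      linarith
  set B : ℝ := Λ + (1 + |Gamma1 ε p Λ|)/δ with hBdef
  have hBΛ : Λ ≤ B := by
    have h : 0 ≤ (1 + |Gamma1 ε p Λ|)/δ := by positivity
    rw [hBdef]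
    linarith
  have hfB : 0 < Gamma1 ε p B := by
    have h := hgmono (Set.mem_Ici.2 le_rfl) (Set.mem_Ici.2 hBΛ) hBΛ
    simp only at h
    have hBe : δ * B = δ * Λ + (1 + |Gamma1 ε p Λ|) := by
      rw [hBdef]; field_simp
    have := neg_abs_le (Gamma1 ε p Λ)
    linarith
  have hB0 : (0:ℝ) < B := lt_of_lt_of_le (by linarith) hBΛ
  have h0mem : (0:ℝ) ∈ Set.Ioo (Gamma1 ε p 0) (Gamma1 ε p B) := by
    rw [hf0]; exact ⟨by linarith, hfB⟩
  obtain ⟨lam0, hlam0mem, hflam0⟩ :=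
    intermediate_value_Ioo hB0.le (hcont.mono (Set.Icc_subset_Ici_self)) h0mem
  -- uniqueness
  have huniq : ∀ lam : ℝ, 0 < lam → Gamma1 ε p lam = 0 → lam = lam0 := by
    intro lam hlam hflam
    by_contra hne
    rcases lt_or_gt_of_ne hne with h | h
    · exact absurd hflam0 (ne_of_gt (key lam hlam hflam lam0 h))
    · have := key lam0 hlam0mem.1 hflam0 lam h
      rw [hflam] at this
      exact lt_irrefl 0 this
  refine ⟨lam0, hlam0mem.1, hflam0, huniq, ?_, fun lam h => key lam0 hlam0mem.1 hflam0 lam h⟩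
  intro lam hlam hlt
  by_contra hge
  push_neg at hge
  rcases eq_or_lt_of_le hge with heq | hpos
  · exact absurd (huniq lam hlam heq.symm) (ne_of_lt hlt)
  · have h0mem' : (0:ℝ) ∈ Set.Ioo (Gamma1 ε p 0) (Gamma1 ε p lam) := by
      rw [hf0]; exact ⟨by linarith, hpos⟩
    obtain ⟨μ, hμmem, hfμ⟩ :=
      intermediate_value_Ioo hlam.le (hcont.mono (Set.Icc_subset_Ici_self)) h0mem'
    have heq2 := huniq μ hμmem.1 hfμ
    have hlt2 : μ < lam0 := hμmem.2.trans hlt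
    rw [heq2] at hlt2
    exact lt_irrefl _ hlt2
end
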